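/- arXiv:2306.08890 — 15 statements merged into one kernel-verified Lean document; each statement's English description precedes it below -/
import Mathlib

section
/- Let (X, d) be a metric space satisfying the Ptolemy inequality, i.e. d(x,y)·d(z,w) ≤ d(x,z)·d(y,w) + d(x,w)·d(y,z) for all x, y, z, w ∈ X, and let D ⊊ X be an open set with nonempty boundary ∂D. Then the function ĉ_D(x,y) = sup_{p ∈ ∂D} d(x,y) / max(d(x,p), d(y,p)) is a metric on D: it is nonnegative, symmetric, vanishes exactly when x = y, and satisfies the triangle inequality ĉ_D(x,y) ≤ ĉ_D(x,z) + ĉ_D(z,y) for all x, y, z ∈ D. -/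
/-!
For a fixed boundary point `p`, the triangle inequality for the single term
`d(x,y) / max(d(x,p), d(y,p))` splits into two cases. If `d(z,p)` dominates both `d(x,p)` and
`d(y,p)`, both denominators on the right equal `d(z,p)` and the claim is the Ptolemy inequality
for `x, y, z, p`. Otherwise both denominators on the right are at most `max(d(x,p), d(y,p))` and
the ordinary triangle inequality suffices. Taking suprema over `p ∈ ∂D` gives the claim.
-/

open Set Metric

/-- The candidate metric `ĉ_D(x,y) = sup_{p ∈ ∂D} d(x,y) / max(d(x,p), d(y,p))`. -/
noncomputable def ctildeDist {X : Type*} [MetricSpace X] (D : Set X) (x y : X) : ℝ :=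
  ⨆ p : frontier D, dist x y / max (dist x (p : X)) (dist y (p : X))

lemma div_max_le_div_max_add_div_max {a b c dxy dxz dzy : ℝ} (ha : 0 < a) (hb : 0 < b)
    (hxz : 0 ≤ dxz) (hzy : 0 ≤ dzy) (htri : dxy ≤ dxz + dzy)
    (hpt : dxy * c ≤ dxz * b + a * dzy) :
    dxy / max a b ≤ dxz / max a c + dzy / max c b := by
  have hab : 0 < max a b := lt_max_of_lt_left ha
  rcases le_or_gt (max a b) c with hc | hc
  · have hac : max a c = c := max_eq_right ((le_max_left a b).trans hc)
    have hcb : max c b = c := max_eq_left ((le_max_right a b).trans hc)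
    rw [hac, hcb, ← add_div, div_le_div_iff₀ hab (hab.trans_le hc)]
    calc dxy * c ≤ dxz * b + a * dzy := hpt
      _ ≤ dxz * max a b + max a b * dzy := by gcongr <;> simp
      _ = (dxz + dzy) * max a b := by ring
  · have hac : dxz / max a b ≤ dxz / max a c :=
      div_le_div_of_nonneg_left hxz (lt_max_of_lt_left ha) (max_le (le_max_left a b) hc.le)
    have hcb : dzy / max a b ≤ dzy / max c b :=
      div_le_div_of_nonneg_left hzy (lt_max_of_lt_right hb) (max_le hc.le (le_max_right a b))
    calc dxy / max a b ≤ (dxz + dzy) / max a b := by gcongr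
      _ = dxz / max a b + dzy / max a b := add_div _ _ _
      _ ≤ dxz / max a c + dzy / max c b := add_le_add hac hcb

lemma dist_div_max_le_add {X : Type*} [MetricSpace X] {x y z p : X}
    (hxp : 0 < dist x p) (hyp : 0 < dist y p)
    (hPt : dist x y * dist z p ≤ dist x z * dist y p + dist x p * dist y z) :
    dist x y / max (dist x p) (dist y p) ≤
      dist x z / max (dist x p) (dist z p) + dist z y / max (dist z p) (dist y p) := by
  refine div_max_le_div_max_add_div_max hxp hyp dist_nonneg dist_nonneg
    (dist_triangle x z y) ?_
  rwa [dist_comm z y]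

lemma IsOpen.dist_pos_of_mem_frontier {X : Type*} [MetricSpace X] {D : Set X} (hD : IsOpen D)
    {x p : X} (hx : x ∈ D) (hp : p ∈ frontier D) : 0 < dist x p :=
  dist_pos.mpr fun hxp => (disjoint_frontier_iff_isOpen.mpr hD).notMem_of_mem_left (hxp ▸ hp) hx

section ctildeDist

variable {X : Type*} [MetricSpace X] {D : Set X}

lemma ctildeDist_nonneg (x y : X) : 0 ≤ ctildeDist D x y :=
  Real.iSup_nonneg fun _ => div_nonneg dist_nonneg (le_max_of_le_left dist_nonneg)

lemma ctildeDist_comm (x y : X) : ctildeDist D x y = ctildeDist D y x :=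
  iSup_congr fun _ => by rw [dist_comm x y, max_comm]

@[simp]
lemma ctildeDist_self (x : X) : ctildeDist D x x = 0 := by
  simp [ctildeDist]

lemma bddAbove_range_dist_div_max (hD : IsOpen D) (hfr : (frontier D).Nonempty) {x : X}
    (hx : x ∈ D) (y : X) :
    BddAbove (range fun p : frontier D => dist x y / max (dist x (p : X)) (dist y (p : X))) := by
  have hpos : 0 < infDist x (frontier D) :=
    (isClosed_frontier.notMem_iff_infDist_pos hfr).1
      fun hxf => (hD.dist_pos_of_mem_frontier hx hxf).ne' (dist_self x)
  refine ⟨dist x y / infDist x (frontier D), ?_⟩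
  rintro _ ⟨p, rfl⟩
  exact div_le_div_of_nonneg_left dist_nonneg hpos
    ((infDist_le_dist_of_mem p.2).trans (le_max_left _ _))

lemma dist_div_max_le_ctildeDist (hD : IsOpen D) (hfr : (frontier D).Nonempty) {x : X}
    (hx : x ∈ D) (y : X) (p : frontier D) :
    dist x y / max (dist x (p : X)) (dist y (p : X)) ≤ ctildeDist D x y :=
  le_ciSup (bddAbove_range_dist_div_max hD hfr hx y) p

lemma ctildeDist_pos (hD : IsOpen D) (hfr : (frontier D).Nonempty) {x y : X} (hx : x ∈ D)
    (hxy : x ≠ y) : 0 < ctildeDist D x y := by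
  obtain ⟨p, hp⟩ := hfr
  have hterm : 0 < dist x y / max (dist x p) (dist y p) :=
    div_pos (dist_pos.mpr hxy) (lt_max_of_lt_left (hD.dist_pos_of_mem_frontier hx hp))
  exact hterm.trans_le (dist_div_max_le_ctildeDist hD ⟨p, hp⟩ hx y ⟨p, hp⟩)

lemma ctildeDist_triangle
    (hPt : ∀ x y z w : X, dist x y * dist z w ≤ dist x z * dist y w + dist x w * dist y z)
    (hD : IsOpen D) (hfr : (frontier D).Nonempty) {x y z : X} (hx : x ∈ D) (hy : y ∈ D)
    (hz : z ∈ D) : ctildeDist D x y ≤ ctildeDist D x z + ctildeDist D z y := by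
  have : Nonempty (frontier D) := hfr.to_subtype
  refine ciSup_le fun p => ?_
  calc dist x y / max (dist x (p : X)) (dist y (p : X))
      ≤ dist x z / max (dist x (p : X)) (dist z (p : X)) +
          dist z y / max (dist z (p : X)) (dist y (p : X)) :=
        dist_div_max_le_add (hD.dist_pos_of_mem_frontier hx p.2)
          (hD.dist_pos_of_mem_frontier hy p.2) (hPt x y z p)
    _ ≤ ctildeDist D x z + ctildeDist D z y :=
        add_le_add (dist_div_max_le_ctildeDist hD hfr hx z p)
          (dist_div_max_le_ctildeDist hD hfr hz y p)

end ctildeDist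

theorem ctilde_is_metric_general {X : Type*} [MetricSpace X]
    (hPt : ∀ x y z w : X, dist x y * dist z w ≤ dist x z * dist y w + dist x w * dist y z)
    (D : Set X) (hD : IsOpen D) (hfr : (frontier D).Nonempty) :
    (∀ x ∈ D, ∀ y ∈ D, 0 ≤ ctildeDist D x y) ∧
    (∀ x ∈ D, ∀ y ∈ D, ctildeDist D x y = ctildeDist D y x) ∧
    (∀ x ∈ D, ∀ y ∈ D, (ctildeDist D x y = 0 ↔ x = y)) ∧
    (∀ x ∈ D, ∀ y ∈ D, ∀ z ∈ D,
      ctildeDist D x y ≤ ctildeDist D x z + ctildeDist D z y) := by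
  refine ⟨fun x _ y _ => ctildeDist_nonneg x y, fun x _ y _ => ctildeDist_comm x y,
    fun x hx y _ => ⟨fun h => ?_, fun h => h ▸ ctildeDist_self x⟩,
    fun x hx y hy z hz => ctildeDist_triangle hPt hD hfr hx hy hz⟩
  by_contra hxy
  exact (ctildeDist_pos hD hfr hx hxy).ne' h

/-- If `(X,d)` is a Ptolemy metric space and `D ⊊ X` is open with nonempty boundary, then
`ĉ_D` is a metric on `D`: nonnegative, symmetric, vanishing exactly at equal points, and
satisfying the triangle inequality. -/
theorem ctilde_is_metric {X : Type*} [MetricSpace X]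
    (hPt : ∀ x y z w : X, dist x y * dist z w ≤ dist x z * dist y w + dist x w * dist y z)
    (D : Set X) (hD : IsOpen D) (hDproper : D ≠ Set.univ) (hfr : (frontier D).Nonempty) :
    (∀ x ∈ D, ∀ y ∈ D, 0 ≤ ctildeDist D x y) ∧
    (∀ x ∈ D, ∀ y ∈ D, ctildeDist D x y = ctildeDist D y x) ∧
    (∀ x ∈ D, ∀ y ∈ D, (ctildeDist D x y = 0 ↔ x = y)) ∧
    (∀ x ∈ D, ∀ y ∈ D, ∀ z ∈ D,
      ctildeDist D x y ≤ ctildeDist D x z + ctildeDist D z y) :=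
  ctilde_is_metric_general hPt D hD hfr
end

section
/- Let (X, d) be a metric space satisfying the Ptolemy inequality d(x,y)·d(z,w) ≤ d(x,z)·d(y,w) + d(x,w)·d(y,z) for all x, y, z, w ∈ X. Then for every point p ∈ X and all x, y, z ∈ X \ {p}, one has d(x,y)/max(d(x,p), d(y,p)) ≤ d(x,z)/max(d(x,p), d(z,p)) + d(y,z)/max(d(y,p), d(z,p)). -/
/-- In a Ptolemy metric space `(X,d)`, for every point `p` and all `x, y, z ≠ p`,
`d(x,y)/max(d(x,p),d(y,p)) ≤ d(x,z)/max(d(x,p),d(z,p)) + d(y,z)/max(d(y,p),d(z,p))`. -/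
theorem ctilde_triangle_punctured {X : Type*} [MetricSpace X]
    (hPt : ∀ x y z w : X, dist x y * dist z w ≤ dist x z * dist y w + dist x w * dist y z)
    (p x y z : X) (hx : x ≠ p) (hy : y ≠ p) (hz : z ≠ p) :
    dist x y / max (dist x p) (dist y p) ≤
      dist x z / max (dist x p) (dist z p) + dist y z / max (dist y p) (dist z p) := by
  have ha : 0 < dist x p := dist_pos.mpr hx
  have hb : 0 < dist y p := dist_pos.mpr hy
  have hc : 0 < dist z p := dist_pos.mpr hz
  have hpt := hPt x y z p
  have htri : dist x y ≤ dist x z + dist z y := dist_triangle x z y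
  rw [dist_comm z y] at htri
  rcases le_total (dist x p) (dist z p) with hac | hac
  · rcases le_total (dist y p) (dist z p) with hbc | hbc
    · -- c largest
      rw [max_eq_right hac, max_eq_right hbc]
      rcases le_total (dist x p) (dist y p) with hab | hab
      · rw [max_eq_right hab]
        rw [div_add_div _ _ hc.ne' hc.ne', div_le_div_iff₀ hb (by positivity)]
        nlinarith [mul_le_mul_of_nonneg_right hpt hc.le,
          mul_le_mul_of_nonneg_right hab
            (by positivity : (0:ℝ) ≤ dist y z * dist z p)]
      · rw [max_eq_left hab]
        rw [div_add_div _ _ hc.ne' hc.ne', div_le_div_iff₀ ha (by positivity)]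
        nlinarith [mul_le_mul_of_nonneg_right hpt hc.le,
          mul_le_mul_of_nonneg_right hab
            (by positivity : (0:ℝ) ≤ dist x z * dist z p)]
    · -- a ≤ c ≤ b
      rw [max_eq_right hac, max_eq_left hbc, max_eq_right (hac.trans hbc)]
      rw [div_add_div _ _ hc.ne' hb.ne', div_le_div_iff₀ hb (by positivity)]
      nlinarith [mul_le_mul_of_nonneg_right hpt hb.le,
        mul_le_mul_of_nonneg_right hac
          (by positivity : (0:ℝ) ≤ dist y z * dist y p)]
  · rcases le_total (dist y p) (dist z p) with hbc | hbc
    · -- b ≤ c ≤ a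
      rw [max_eq_left hac, max_eq_right hbc, max_eq_left (hbc.trans hac)]
      rw [div_add_div _ _ ha.ne' hc.ne', div_le_div_iff₀ ha (by positivity)]
      nlinarith [mul_le_mul_of_nonneg_right hpt ha.le,
        mul_le_mul_of_nonneg_right hbc
          (by positivity : (0:ℝ) ≤ dist x z * dist x p)]
    · -- c smallest
      rw [max_eq_left hac, max_eq_left hbc]
      rcases le_total (dist x p) (dist y p) with hab | hab
      · rw [max_eq_right hab]
        rw [div_add_div _ _ ha.ne' hb.ne', div_le_div_iff₀ hb (by positivity)]
        nlinarith [mul_le_mul_of_nonneg_right htri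
            (by positivity : (0:ℝ) ≤ dist x p * dist y p),
          mul_le_mul_of_nonneg_right hab
            (by positivity : (0:ℝ) ≤ dist x z * dist y p)]
      · rw [max_eq_left hab]
        rw [div_add_div _ _ ha.ne' hb.ne', div_le_div_iff₀ ha (by positivity)]
        nlinarith [mul_le_mul_of_nonneg_right htri
            (by positivity : (0:ℝ) ≤ dist x p * dist y p),
          mul_le_mul_of_nonneg_right hab
            (by positivity : (0:ℝ) ≤ dist y z * dist x p)]
end

section
/- Let q ≥ 1, let D ⊊ ℝⁿ be an open set with nonempty boundary ∂D, and let x, y ∈ D. Then 2^{1/q}·d_min ≤ inf_{p ∈ ∂D} (|x−p|^q + |y−p|^q)^{1/q} ≤ 2^{1/q}·(|x−y| + d_min), where d_min = min(dist(x,∂D), dist(y,∂D)). -/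
open Set Metric

private lemma qsum_low (q : ℝ) (hq : 1 ≤ q) {a b m : ℝ} (hm : 0 ≤ m)
    (ha : m ≤ a) (hb : m ≤ b) :
    (2 : ℝ) ^ (1 / q) * m ≤ (a ^ q + b ^ q) ^ (1 / q) := by
  have hq0 : (0 : ℝ) < q := lt_of_lt_of_le one_pos hq
  have h1 : (2 : ℝ) ^ (1 / q) * m = (m ^ q + m ^ q) ^ (1 / q) := by
    rw [← two_mul, Real.mul_rpow (by norm_num) (Real.rpow_nonneg hm q),
      ← Real.rpow_mul hm, mul_one_div, div_self hq0.ne', Real.rpow_one]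
  rw [h1]
  apply Real.rpow_le_rpow (by positivity)
    (add_le_add (Real.rpow_le_rpow hm ha hq0.le) (Real.rpow_le_rpow hm hb hq0.le))
    (by positivity)

private lemma qsum_up (q : ℝ) (hq : 1 ≤ q) {a b c : ℝ} (ha : 0 ≤ a) (hb : 0 ≤ b)
    (hac : a ≤ c) (hbc : b ≤ c) :
    (a ^ q + b ^ q) ^ (1 / q) ≤ (2 : ℝ) ^ (1 / q) * c := by
  have hq0 : (0 : ℝ) < q := lt_of_lt_of_le one_pos hq
  have hc : 0 ≤ c := ha.trans hac
  have h1 : (2 : ℝ) ^ (1 / q) * c = (c ^ q + c ^ q) ^ (1 / q) := by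
    rw [← two_mul, Real.mul_rpow (by norm_num) (Real.rpow_nonneg hc q),
      ← Real.rpow_mul hc, mul_one_div, div_self hq0.ne', Real.rpow_one]
  rw [h1]
  apply Real.rpow_le_rpow (by positivity)
    (add_le_add (Real.rpow_le_rpow ha hac hq0.le) (Real.rpow_le_rpow hb hbc hq0.le))
    (by positivity)

/-- Lemma 3(3): for `q ≥ 1`,
`2^{1/q}·d_min ≤ inf_{p ∈ ∂D} (|x−p|^q + |y−p|^q)^{1/q} ≤ 2^{1/q}·(|x−y| + d_min)`. -/
theorem inf_qsum_dist_bounds {n : ℕ} (hn : 1 ≤ n) (q : ℝ) (hq : 1 ≤ q)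
    (D : Set (EuclideanSpace ℝ (Fin n))) (hD : IsOpen D) (hDproper : D ≠ Set.univ)
    (hfr : (frontier D).Nonempty)
    (x y : EuclideanSpace ℝ (Fin n)) (hx : x ∈ D) (hy : y ∈ D) :
    (2 : ℝ) ^ (1 / q) * min (infDist x (frontier D)) (infDist y (frontier D)) ≤
      (⨅ p : frontier D,
        (‖x - (p : EuclideanSpace ℝ (Fin n))‖ ^ q +
          ‖y - (p : EuclideanSpace ℝ (Fin n))‖ ^ q) ^ (1 / q)) ∧
    (⨅ p : frontier D,
        (‖x - (p : EuclideanSpace ℝ (Fin n))‖ ^ q +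
          ‖y - (p : EuclideanSpace ℝ (Fin n))‖ ^ q) ^ (1 / q)) ≤
      (2 : ℝ) ^ (1 / q) *
        (‖x - y‖ + min (infDist x (frontier D)) (infDist y (frontier D))) := by
  have := hfr.to_subtype
  set F := frontier D
  set m := min (infDist x F) (infDist y F) with hm
  have hm0 : 0 ≤ m := le_min (infDist_nonneg) (infDist_nonneg)
  have hbdd : BddBelow (Set.range fun p : F =>
      (‖x - (p : EuclideanSpace ℝ (Fin n))‖ ^ q +
        ‖y - (p : EuclideanSpace ℝ (Fin n))‖ ^ q) ^ (1 / q)) := by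
    refine ⟨0, ?_⟩
    rintro _ ⟨p, rfl⟩
    positivity
  constructor
  · apply le_ciInf
    intro p
    apply qsum_low q hq hm0
    · calc m ≤ infDist x F := min_le_left _ _
        _ ≤ dist x p := infDist_le_dist_of_mem p.2
        _ = ‖x - (p : EuclideanSpace ℝ (Fin n))‖ := dist_eq_norm _ _
    · calc m ≤ infDist y F := min_le_right _ _
        _ ≤ dist y p := infDist_le_dist_of_mem p.2
        _ = ‖y - (p : EuclideanSpace ℝ (Fin n))‖ := dist_eq_norm _ _
  · rcases le_total (infDist x F) (infDist y F) with h | h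
    · obtain ⟨p, hpF, hp⟩ := IsClosed.exists_infDist_eq_dist isClosed_frontier hfr x
      have hxm : ‖x - p‖ = m := by
        rw [hm, min_eq_left h, hp, dist_eq_norm]
      refine le_trans (ciInf_le hbdd ⟨p, hpF⟩) ?_
      apply qsum_up q hq (norm_nonneg _) (norm_nonneg _)
      · rw [hxm]; nlinarith [norm_nonneg (x - y)]
      · calc ‖y - p‖ ≤ ‖y - x‖ + ‖x - p‖ := norm_sub_le_norm_sub_add_norm_sub _ _ _
          _ = ‖x - y‖ + m := by rw [norm_sub_rev, hxm]
    · obtain ⟨p, hpF, hp⟩ := IsClosed.exists_infDist_eq_dist isClosed_frontier hfr y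
      have hym : ‖y - p‖ = m := by
        rw [hm, min_eq_right h, hp, dist_eq_norm]
      refine le_trans (ciInf_le hbdd ⟨p, hpF⟩) ?_
      apply qsum_up q hq (norm_nonneg _) (norm_nonneg _)
      · calc ‖x - p‖ ≤ ‖x - y‖ + ‖y - p‖ := norm_sub_le_norm_sub_add_norm_sub _ _ _
          _ = ‖x - y‖ + m := by rw [hym]
      · rw [hym]; nlinarith [norm_nonneg (x - y)]
end

section
/- Let D ⊊ ℝⁿ be an open set with nonempty boundary ∂D and let x, y ∈ D. Then |x−y|/(|x−y| + d_min) ≤ ĉ_D(x,y) ≤ |x−y|/d_min, where ĉ_D(x,y) = sup_{p ∈ ∂D} |x−y| / max(|x−p|, |y−p|) and d_min = min(dist(x,∂D), dist(y,∂D)). -/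
open Set Metric

/-- The `ĉ` metric: `ĉ_D(x,y) = sup_{p ∈ ∂D} |x−y| / max(|x−p|, |y−p|)`. -/
noncomputable def ctilde {E : Type*} [SeminormedAddCommGroup E] (D : Set E) (x y : E) : ℝ :=
  ⨆ p : frontier D, ‖x - y‖ / max ‖x - (p : E)‖ ‖y - (p : E)‖

/-- Lemma 4(1): `|x−y|/(|x−y| + d_min) ≤ ĉ_D(x,y) ≤ |x−y|/d_min`. -/
theorem ctilde_bounds {n : ℕ} (hn : 1 ≤ n)
    (D : Set (EuclideanSpace ℝ (Fin n))) (hD : IsOpen D) (hDproper : D ≠ Set.univ)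
    (hfr : (frontier D).Nonempty)
    (x y : EuclideanSpace ℝ (Fin n)) (hx : x ∈ D) (hy : y ∈ D) :
    ‖x - y‖ / (‖x - y‖ + min (infDist x (frontier D)) (infDist y (frontier D))) ≤
      ctilde D x y ∧
    ctilde D x y ≤ ‖x - y‖ / min (infDist x (frontier D)) (infDist y (frontier D)) := by
  set F := frontier D with hF
  have hFc : IsClosed F := isClosed_frontier
  set dm := min (infDist x F) (infDist y F) with hdm
  have hxF : x ∉ F := fun h => (disjoint_frontier_iff_isOpen.mpr hD).le_bot ⟨h, hx⟩
  have hyF : y ∉ F := fun h => (disjoint_frontier_iff_isOpen.mpr hD).le_bot ⟨h, hy⟩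
  have hdx : 0 < infDist x F := (hFc.notMem_iff_infDist_pos hfr).mp hxF
  have hdy : 0 < infDist y F := (hFc.notMem_iff_infDist_pos hfr).mp hyF
  have hdm0 : 0 < dm := lt_min hdx hdy
  have hxy0 : (0:ℝ) ≤ ‖x - y‖ := norm_nonneg _
  haveI : Nonempty F := hfr.to_subtype
  -- each term bound
  have hterm : ∀ p : F, ‖x - y‖ / max ‖x - (p : EuclideanSpace ℝ (Fin n))‖
      ‖y - (p : EuclideanSpace ℝ (Fin n))‖ ≤ ‖x - y‖ / dm := by
    intro p
    have h1 : dm ≤ ‖x - (p : EuclideanSpace ℝ (Fin n))‖ := by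
      calc dm ≤ infDist x F := min_le_left _ _
        _ ≤ dist x p := infDist_le_dist_of_mem p.2
        _ = ‖x - (p : EuclideanSpace ℝ (Fin n))‖ := dist_eq_norm _ _
    exact div_le_div_of_nonneg_left hxy0 hdm0 (le_trans h1 (le_max_left _ _))
  have hbdd : BddAbove (Set.range fun p : F => ‖x - y‖ / max
      ‖x - (p : EuclideanSpace ℝ (Fin n))‖ ‖y - (p : EuclideanSpace ℝ (Fin n))‖) := by
    exact ⟨‖x - y‖ / dm, by rintro _ ⟨p, rfl⟩; exact hterm p⟩
  constructor
  · -- lower bound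
    rcases min_cases (infDist x F) (infDist y F) with ⟨hmin, _⟩ | ⟨hmin, _⟩
    · obtain ⟨p, hpF, hp⟩ := hFc.exists_infDist_eq_dist hfr x
      have hxp : ‖x - p‖ = dm := by rw [hdm, hmin, hp, dist_eq_norm]
      have hmax : max ‖x - p‖ ‖y - p‖ ≤ ‖x - y‖ + dm := by
        apply max_le
        · rw [hxp]; linarith
        · have h3 : ‖y - p‖ ≤ ‖y - x‖ + ‖x - p‖ := by
            simpa [dist_eq_norm] using dist_triangle y x p
          rw [norm_sub_rev y x, hxp] at h3; exact h3
      have hle : ‖x - y‖ / (‖x - y‖ + dm) ≤ ‖x - y‖ / max ‖x - p‖ ‖y - p‖ := by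
        apply div_le_div_of_nonneg_left hxy0 _ hmax
        exact lt_of_lt_of_le hdm0 (le_trans (by linarith [hxp]; ) (le_max_left _ _))
      refine hle.trans ?_
      rw [ctilde]
      exact le_ciSup hbdd ⟨p, hpF⟩
    · obtain ⟨p, hpF, hp⟩ := hFc.exists_infDist_eq_dist hfr y
      have hyp : ‖y - p‖ = dm := by rw [hdm, hmin, hp, dist_eq_norm]
      have hmax : max ‖x - p‖ ‖y - p‖ ≤ ‖x - y‖ + dm := by
        apply max_le
        · have h3 : ‖x - p‖ ≤ ‖x - y‖ + ‖y - p‖ := by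
            simpa [dist_eq_norm] using dist_triangle x y p
          rw [hyp] at h3; exact h3
        · rw [hyp]; linarith
      have hle : ‖x - y‖ / (‖x - y‖ + dm) ≤ ‖x - y‖ / max ‖x - p‖ ‖y - p‖ := by
        apply div_le_div_of_nonneg_left hxy0 _ hmax
        exact lt_of_lt_of_le hdm0 (le_trans (le_of_eq hyp.symm) (le_max_right _ _))
      refine hle.trans ?_
      rw [ctilde]
      exact le_ciSup hbdd ⟨p, hpF⟩
  · rw [ctilde]
    exact ciSup_le hterm
end

section
/- Let D ⊊ ℝⁿ be an open set with nonempty boundary ∂D and let x, y ∈ D. Then |x−y|/(d_min·(d_min + |x−y|)) ≤ c_D(x,y) ≤ |x−y|/(d(x)·d(y)), where c_D(x,y) = sup_{p ∈ ∂D} |x−y| / (|x−p|·|y−p|) is the Cassinian metric, d(x) = dist(x,∂D), d(y) = dist(y,∂D), and d_min = min(d(x), d(y)). -/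
open Set Metric

/-- The Cassinian metric: `c_D(x,y) = sup_{p ∈ ∂D} |x−y| / (|x−p|·|y−p|)`. -/
noncomputable def cassinian {E : Type*} [SeminormedAddCommGroup E] (D : Set E) (x y : E) : ℝ :=
  ⨆ p : frontier D, ‖x - y‖ / (‖x - (p : E)‖ * ‖y - (p : E)‖)

/-- Lemma 4(2): `|x−y|/(d_min·(d_min + |x−y|)) ≤ c_D(x,y) ≤ |x−y|/(d(x)·d(y))`. -/
theorem cassinian_bounds {n : ℕ} (hn : 1 ≤ n)
    (D : Set (EuclideanSpace ℝ (Fin n))) (hD : IsOpen D) (hDproper : D ≠ Set.univ)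
    (hfr : (frontier D).Nonempty)
    (x y : EuclideanSpace ℝ (Fin n)) (hx : x ∈ D) (hy : y ∈ D) :
    ‖x - y‖ / (min (infDist x (frontier D)) (infDist y (frontier D)) *
        (min (infDist x (frontier D)) (infDist y (frontier D)) + ‖x - y‖)) ≤
      cassinian D x y ∧
    cassinian D x y ≤ ‖x - y‖ / (infDist x (frontier D) * infDist y (frontier D)) := by
  haveI : Nonempty (frontier D) := hfr.to_subtype
  set dx := infDist x (frontier D) with hdxdef
  set dy := infDist y (frontier D) with hdydef
  have hxf : x ∉ frontier D := by
    rw [hD.frontier_eq]; exact fun h => h.2 hx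
  have hyf : y ∉ frontier D := by
    rw [hD.frontier_eq]; exact fun h => h.2 hy
  have hdx : 0 < dx := (isClosed_frontier.notMem_iff_infDist_pos hfr).1 hxf
  have hdy : 0 < dy := (isClosed_frontier.notMem_iff_infDist_pos hfr).1 hyf
  have hxp : ∀ p : frontier D, dx ≤ ‖x - (p : EuclideanSpace ℝ (Fin n))‖ := fun p => by
    rw [← dist_eq_norm]; exact infDist_le_dist_of_mem p.2
  have hyp : ∀ p : frontier D, dy ≤ ‖y - (p : EuclideanSpace ℝ (Fin n))‖ := fun p => by
    rw [← dist_eq_norm]; exact infDist_le_dist_of_mem p.2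
  have hub : ∀ p : frontier D,
      ‖x - y‖ / (‖x - (p : EuclideanSpace ℝ (Fin n))‖ * ‖y - (p : EuclideanSpace ℝ (Fin n))‖)
        ≤ ‖x - y‖ / (dx * dy) := fun p => by
    apply div_le_div_of_nonneg_left (norm_nonneg _) (by positivity)
    exact mul_le_mul (hxp p) (hyp p) hdy.le ((hdx.trans_le (hxp p)).le)
  have hbdd : BddAbove (Set.range fun p : frontier D =>
      ‖x - y‖ / (‖x - (p : EuclideanSpace ℝ (Fin n))‖ * ‖y - (p : EuclideanSpace ℝ (Fin n))‖)) :=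
    ⟨‖x - y‖ / (dx * dy), by rintro _ ⟨p, rfl⟩; exact hub p⟩
  unfold cassinian
  constructor
  · rcases le_total dx dy with hle | hle
    · rw [min_eq_left hle]
      obtain ⟨p, hp, hpd⟩ := isClosed_frontier.exists_infDist_eq_dist hfr x
      have h2 : ‖y - p‖ ≤ dx + ‖x - y‖ := by
        calc ‖y - p‖ ≤ ‖y - x‖ + ‖x - p‖ := by
              simpa using norm_add_le (y - x) (x - p)
          _ = dx + ‖x - y‖ := by
              rw [norm_sub_rev y x, show ‖x - p‖ = dx from by
                rw [← dist_eq_norm]; exact hpd.symm]; ring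
      refine le_trans ?_ (le_ciSup hbdd ⟨p, hp⟩)
      have hyp0 : 0 < ‖y - p‖ := hdy.trans_le (hyp ⟨p, hp⟩)
      have hc : ((⟨p, hp⟩ : frontier D) : EuclideanSpace ℝ (Fin n)) = p := rfl
      rw [hc, show ‖x - p‖ = dx from by rw [← dist_eq_norm]; exact hpd.symm]
      apply div_le_div_of_nonneg_left (norm_nonneg _) (by positivity)
      exact mul_le_mul_of_nonneg_left (by linarith) hdx.le
    · rw [min_eq_right hle]
      obtain ⟨p, hp, hpd⟩ := isClosed_frontier.exists_infDist_eq_dist hfr y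
      have h2 : ‖x - p‖ ≤ dy + ‖x - y‖ := by
        calc ‖x - p‖ ≤ ‖x - y‖ + ‖y - p‖ := by
              simpa using norm_add_le (x - y) (y - p)
          _ = dy + ‖x - y‖ := by
              rw [show ‖y - p‖ = dy from by
                rw [← dist_eq_norm]; exact hpd.symm]; ring
      refine le_trans ?_ (le_ciSup hbdd ⟨p, hp⟩)
      have hxp0 : 0 < ‖x - p‖ := hdx.trans_le (hxp ⟨p, hp⟩)
      have hc : ((⟨p, hp⟩ : frontier D) : EuclideanSpace ℝ (Fin n)) = p := rfl
      rw [hc, show ‖y - p‖ = dy from by rw [← dist_eq_norm]; exact hpd.symm]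
      apply div_le_div_of_nonneg_left (norm_nonneg _) (by positivity)
      calc ‖x - p‖ * dy ≤ (dy + ‖x - y‖) * dy := by nlinarith
        _ = dy * (dy + ‖x - y‖) := by ring
  · exact ciSup_le hub
end

section
/- Let q ≥ 1, let D ⊊ ℝⁿ be an open set with nonempty boundary ∂D, and let x, y ∈ D. Then |x−y|/(2^{1/q}·(|x−y| + d_min)) ≤ b_{D,q}(x,y) ≤ |x−y|/(2^{1/q}·d_min), where b_{D,q}(x,y) = sup_{p ∈ ∂D} |x−y| / (|x−p|^q + |y−p|^q)^{1/q} is the Barrlund metric and d_min = min(dist(x,∂D), dist(y,∂D)). -/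
open Set Metric

/-- The Barrlund metric: `b_{D,q}(x,y) = sup_{p ∈ ∂D} |x−y| / (|x−p|^q + |y−p|^q)^{1/q}`. -/
noncomputable def barrlund {E : Type*} [SeminormedAddCommGroup E] (q : ℝ) (D : Set E)
    (x y : E) : ℝ :=
  ⨆ p : frontier D, ‖x - y‖ / (‖x - (p : E)‖ ^ q + ‖y - (p : E)‖ ^ q) ^ (1 / q)

/-- Lemma 4(3): for `q ≥ 1`,
`|x−y|/(2^{1/q}·(|x−y| + d_min)) ≤ b_{D,q}(x,y) ≤ |x−y|/(2^{1/q}·d_min)`. -/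
theorem barrlund_bounds {n : ℕ} (hn : 1 ≤ n) (q : ℝ) (hq : 1 ≤ q)
    (D : Set (EuclideanSpace ℝ (Fin n))) (hD : IsOpen D) (hDproper : D ≠ Set.univ)
    (hfr : (frontier D).Nonempty)
    (x y : EuclideanSpace ℝ (Fin n)) (hx : x ∈ D) (hy : y ∈ D) :
    ‖x - y‖ / ((2 : ℝ) ^ (1 / q) *
        (‖x - y‖ + min (infDist x (frontier D)) (infDist y (frontier D)))) ≤
      barrlund q D x y ∧
    barrlund q D x y ≤
      ‖x - y‖ / ((2 : ℝ) ^ (1 / q) *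
        min (infDist x (frontier D)) (infDist y (frontier D))) := by
  have hF : IsClosed (frontier D) := isClosed_frontier
  have hxF : x ∉ frontier D := by
    rw [hD.frontier_eq]; exact fun h => h.2 hx
  have hyF : y ∉ frontier D := by
    rw [hD.frontier_eq]; exact fun h => h.2 hy
  have hdx : 0 < infDist x (frontier D) := (hF.notMem_iff_infDist_pos hfr).1 hxF
  have hdy : 0 < infDist y (frontier D) := (hF.notMem_iff_infDist_pos hfr).1 hyF
  set dm := min (infDist x (frontier D)) (infDist y (frontier D)) with hdm
  have hdm0 : 0 < dm := lt_min hdx hdy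
  have hq0 : 0 < q := lt_of_lt_of_le one_pos hq
  have hq0' : (0:ℝ) ≤ 1/q := by positivity
  have h2q : 0 < (2:ℝ) ^ (1/q) := Real.rpow_pos_of_pos two_pos _
  haveI : Nonempty (frontier D) := hfr.to_subtype
  have key : ∀ a : ℝ, 0 ≤ a → (a ^ q + a ^ q) ^ (1/q) = 2 ^ (1/q) * a := by
    intro a ha
    have h2 : a ^ q + a ^ q = 2 * a ^ q := by ring
    rw [h2, Real.mul_rpow (by norm_num) (Real.rpow_nonneg ha q),
      ← Real.rpow_mul ha, mul_one_div_cancel hq0.ne', Real.rpow_one]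
  have hnx : ∀ p : frontier D, dm ≤ ‖x - (p : EuclideanSpace ℝ (Fin n))‖ := fun p =>
    (min_le_left _ _).trans ((infDist_le_dist_of_mem p.2).trans_eq (dist_eq_norm _ _))
  have hny : ∀ p : frontier D, dm ≤ ‖y - (p : EuclideanSpace ℝ (Fin n))‖ := fun p =>
    (min_le_right _ _).trans ((infDist_le_dist_of_mem p.2).trans_eq (dist_eq_norm _ _))
  have hden : ∀ p : frontier D,
      2 ^ (1/q) * dm ≤ (‖x - (p : EuclideanSpace ℝ (Fin n))‖ ^ q +
        ‖y - (p : EuclideanSpace ℝ (Fin n))‖ ^ q) ^ (1/q) := by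
    intro p
    rw [← key dm hdm0.le]
    exact Real.rpow_le_rpow (by positivity)
      (add_le_add (Real.rpow_le_rpow hdm0.le (hnx p) hq0.le)
        (Real.rpow_le_rpow hdm0.le (hny p) hq0.le)) hq0'
  have hub : ∀ p : frontier D,
      ‖x - y‖ / (‖x - (p : EuclideanSpace ℝ (Fin n))‖ ^ q +
        ‖y - (p : EuclideanSpace ℝ (Fin n))‖ ^ q) ^ (1/q) ≤
      ‖x - y‖ / (2 ^ (1/q) * dm) := by
    intro p
    exact div_le_div_of_nonneg_left (norm_nonneg _) (by positivity) (hden p)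
  have bdd : BddAbove (Set.range fun p : frontier D =>
      ‖x - y‖ / (‖x - (p : EuclideanSpace ℝ (Fin n))‖ ^ q +
        ‖y - (p : EuclideanSpace ℝ (Fin n))‖ ^ q) ^ (1/q)) := by
    refine ⟨‖x - y‖ / (2 ^ (1/q) * dm), ?_⟩
    rintro v ⟨p, rfl⟩
    exact hub p
  constructor
  · -- lower bound
    obtain ⟨p, hp, h1, h2⟩ : ∃ p ∈ frontier D,
        ‖x - p‖ ≤ ‖x - y‖ + dm ∧ ‖y - p‖ ≤ ‖x - y‖ + dm := by
      rcases le_total (infDist x (frontier D)) (infDist y (frontier D)) with h | h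
      · obtain ⟨p, hp, hdist⟩ := hF.exists_infDist_eq_dist hfr x
        have hxp : ‖x - p‖ = dm := by
          rw [← dist_eq_norm, ← hdist, hdm, min_eq_left h]
        refine ⟨p, hp, ?_, ?_⟩
        · rw [hxp]; linarith [norm_nonneg (x - y)]
        · calc ‖y - p‖ = dist y p := (dist_eq_norm _ _).symm
            _ ≤ dist y x + dist x p := dist_triangle _ _ _
            _ = ‖x - y‖ + ‖x - p‖ := by rw [dist_eq_norm, dist_eq_norm, norm_sub_rev y x]
            _ = ‖x - y‖ + dm := by rw [hxp]
      · obtain ⟨p, hp, hdist⟩ := hF.exists_infDist_eq_dist hfr y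
        have hyp : ‖y - p‖ = dm := by
          rw [← dist_eq_norm, ← hdist, hdm, min_eq_right h]
        refine ⟨p, hp, ?_, ?_⟩
        · calc ‖x - p‖ = dist x p := (dist_eq_norm _ _).symm
            _ ≤ dist x y + dist y p := dist_triangle _ _ _
            _ = ‖x - y‖ + ‖y - p‖ := by rw [dist_eq_norm, dist_eq_norm]
            _ = ‖x - y‖ + dm := by rw [hyp]
        · rw [hyp]; linarith [norm_nonneg (x - y)]
    refine le_trans ?_ (le_ciSup bdd ⟨p, hp⟩)
    have hle : (‖x - p‖ ^ q + ‖y - p‖ ^ q) ^ (1/q) ≤ 2 ^ (1/q) * (‖x - y‖ + dm) := by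
      rw [← key (‖x - y‖ + dm) (by positivity)]
      exact Real.rpow_le_rpow (by positivity)
        (add_le_add (Real.rpow_le_rpow (norm_nonneg _) h1 hq0.le)
          (Real.rpow_le_rpow (norm_nonneg _) h2 hq0.le)) hq0'
    have hdenpos : 0 < (‖x - p‖ ^ q + ‖y - p‖ ^ q) ^ (1/q) :=
      lt_of_lt_of_le (by positivity) (hden ⟨p, hp⟩)
    exact div_le_div_of_nonneg_left (norm_nonneg _) hdenpos hle
  · exact ciSup_le hub
end

section
/- Let q ≥ 1, let D ⊊ ℝⁿ be an open set with nonempty boundary ∂D, let x ∈ D and r ∈ (0,1). Then B_{b_{D,q}}(x, R₁) ⊆ B_{ĉ}(x, r) ⊆ B_{b_{D,q}}(x, R₂), where R₁ = r/(2^{1/q}(1+r)) and R₂ = r/(2^{1/q}(1−r)). -/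
open Set Metric

private lemma aux_S_le (q : ℝ) (hq : 1 ≤ q) {A B : ℝ} (hA : 0 ≤ A) (hB : 0 ≤ B) :
    (A ^ q + B ^ q) ^ (1 / q) ≤ (2 : ℝ) ^ (1 / q) * max A B := by
  have hq0 : 0 < q := lt_of_lt_of_le one_pos hq
  have hM : (0 : ℝ) ≤ max A B := le_trans hA (le_max_left _ _)
  have hAq : A ^ q ≤ max A B ^ q := Real.rpow_le_rpow hA (le_max_left _ _) hq0.le
  have hBq : B ^ q ≤ max A B ^ q := Real.rpow_le_rpow hB (le_max_right _ _) hq0.le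
  have hsum : A ^ q + B ^ q ≤ 2 * max A B ^ q := by linarith
  have h1 : (A ^ q + B ^ q) ^ (1 / q) ≤ (2 * max A B ^ q) ^ (1 / q) :=
    Real.rpow_le_rpow (by positivity) hsum (by positivity)
  calc (A ^ q + B ^ q) ^ (1 / q) ≤ (2 * max A B ^ q) ^ (1 / q) := h1
    _ = (2 : ℝ) ^ (1 / q) * (max A B ^ q) ^ (1 / q) :=
        Real.mul_rpow (by norm_num) (by positivity)
    _ = (2 : ℝ) ^ (1 / q) * max A B := by
        rw [← Real.rpow_mul hM, mul_one_div_cancel hq0.ne', Real.rpow_one]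

private lemma aux_S_ge (q : ℝ) (hq : 1 ≤ q) {A B m : ℝ} (hm : 0 ≤ m)
    (hA : m ≤ A) (hB : m ≤ B) :
    (2 : ℝ) ^ (1 / q) * m ≤ (A ^ q + B ^ q) ^ (1 / q) := by
  have hq0 : 0 < q := lt_of_lt_of_le one_pos hq
  have hAq : m ^ q ≤ A ^ q := Real.rpow_le_rpow hm hA hq0.le
  have hBq : m ^ q ≤ B ^ q := Real.rpow_le_rpow hm hB hq0.le
  have hsum : 2 * m ^ q ≤ A ^ q + B ^ q := by linarith
  calc (2 : ℝ) ^ (1 / q) * m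
      = (2 : ℝ) ^ (1 / q) * (m ^ q) ^ (1 / q) := by
        rw [← Real.rpow_mul hm, mul_one_div_cancel hq0.ne', Real.rpow_one]
    _ = (2 * m ^ q) ^ (1 / q) := (Real.mul_rpow (by norm_num) (by positivity)).symm
    _ ≤ (A ^ q + B ^ q) ^ (1 / q) :=
        Real.rpow_le_rpow (by positivity) hsum (by positivity)

/-- Theorem: `B_{b_{D,q}}(x, r/(2^{1/q}(1+r))) ⊆ B_{ĉ}(x,r) ⊆ B_{b_{D,q}}(x, r/(2^{1/q}(1−r)))`. -/
theorem barrlund_ctilde_ball_inclusions {n : ℕ} (hn : 1 ≤ n) (q : ℝ) (hq : 1 ≤ q)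
    (D : Set (EuclideanSpace ℝ (Fin n))) (hD : IsOpen D) (hDproper : D ≠ Set.univ)
    (hfr : (frontier D).Nonempty)
    (x : EuclideanSpace ℝ (Fin n)) (hx : x ∈ D) (r : ℝ) (hr0 : 0 < r) (hr1 : r < 1) :
    {y | y ∈ D ∧ barrlund q D x y < r / ((2 : ℝ) ^ (1 / q) * (1 + r))} ⊆
      {y | y ∈ D ∧ ctilde D x y < r} ∧
    {y | y ∈ D ∧ ctilde D x y < r} ⊆
      {y | y ∈ D ∧ barrlund q D x y < r / ((2 : ℝ) ^ (1 / q) * (1 - r))} := by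
  haveI : Nonempty (frontier D) := hfr.to_subtype
  have hq0 : 0 < q := lt_of_lt_of_le one_pos hq
  have h2q : (0 : ℝ) < 2 ^ (1 / q) := Real.rpow_pos_of_pos two_pos _
  have hxnf : x ∉ frontier D := by
    rw [hD.frontier_eq]; exact fun h => h.2 hx
  set d := Metric.infDist x (frontier D) with hd_def
  have hd : 0 < d := by
    rw [hd_def, ← isClosed_frontier.notMem_iff_infDist_pos hfr]; exact hxnf
  have hxd : ∀ p : frontier D, d ≤ ‖x - (p : EuclideanSpace ℝ (Fin n))‖ := fun p => by
    rw [← dist_eq_norm]; exact Metric.infDist_le_dist_of_mem p.2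
  -- positivity of denominators and boundedness of the families
  have hMpos : ∀ (y : EuclideanSpace ℝ (Fin n)) (p : frontier D),
      0 < max ‖x - (p : EuclideanSpace ℝ (Fin n))‖ ‖y - (p : EuclideanSpace ℝ (Fin n))‖ :=
    fun y p => lt_of_lt_of_le (lt_of_lt_of_le hd (hxd p)) (le_max_left _ _)
  have hSpos : ∀ (y : EuclideanSpace ℝ (Fin n)) (p : frontier D),
      d ≤ (‖x - (p : EuclideanSpace ℝ (Fin n))‖ ^ q
        + ‖y - (p : EuclideanSpace ℝ (Fin n))‖ ^ q) ^ (1 / q) := by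
    intro y p
    refine le_trans (hxd p) ?_
    calc ‖x - (p : EuclideanSpace ℝ (Fin n))‖
        = (‖x - (p : EuclideanSpace ℝ (Fin n))‖ ^ q) ^ (1 / q) := by
          rw [← Real.rpow_mul (norm_nonneg _), mul_one_div_cancel hq0.ne', Real.rpow_one]
      _ ≤ (‖x - (p : EuclideanSpace ℝ (Fin n))‖ ^ q
            + ‖y - (p : EuclideanSpace ℝ (Fin n))‖ ^ q) ^ (1 / q) :=
          Real.rpow_le_rpow (by positivity)
            (le_add_of_nonneg_right (by positivity)) (by positivity)
  have bddC : ∀ y : EuclideanSpace ℝ (Fin n), BddAbove (Set.range fun p : frontier D =>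
      ‖x - y‖ / max ‖x - (p : EuclideanSpace ℝ (Fin n))‖ ‖y - (p : EuclideanSpace ℝ (Fin n))‖) := by
    intro y
    refine ⟨‖x - y‖ / d, ?_⟩
    rintro _ ⟨p, rfl⟩
    exact div_le_div_of_nonneg_left (norm_nonneg _) hd
      (le_trans (hxd p) (le_max_left _ _))
  have bddB : ∀ y : EuclideanSpace ℝ (Fin n), BddAbove (Set.range fun p : frontier D =>
      ‖x - y‖ / (‖x - (p : EuclideanSpace ℝ (Fin n))‖ ^ q
        + ‖y - (p : EuclideanSpace ℝ (Fin n))‖ ^ q) ^ (1 / q)) := by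
    intro y
    refine ⟨‖x - y‖ / d, ?_⟩
    rintro _ ⟨p, rfl⟩
    exact div_le_div_of_nonneg_left (norm_nonneg _) hd (hSpos y p)
  constructor
  · -- first inclusion
    rintro y ⟨hyD, hby⟩
    refine ⟨hyD, ?_⟩
    have key : ctilde D x y ≤ r / (1 + r) := by
      refine ciSup_le fun p => ?_
      set A := ‖x - (p : EuclideanSpace ℝ (Fin n))‖ with hA_def
      set B := ‖y - (p : EuclideanSpace ℝ (Fin n))‖ with hB_def
      have hM : 0 < max A B := hMpos y p
      have hS0 : 0 < (A ^ q + B ^ q) ^ (1 / q) := lt_of_lt_of_le hd (hSpos y p)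
      have hSle : (A ^ q + B ^ q) ^ (1 / q) ≤ (2 : ℝ) ^ (1 / q) * max A B :=
        aux_S_le q hq (norm_nonneg _) (norm_nonneg _)
      have step1 : ‖x - y‖ / max A B ≤
          (2 : ℝ) ^ (1 / q) * (‖x - y‖ / (A ^ q + B ^ q) ^ (1 / q)) := by
        rw [mul_div_assoc', div_le_div_iff₀ hM hS0]
        nlinarith [norm_nonneg (x - y)]
      have step2 : ‖x - y‖ / (A ^ q + B ^ q) ^ (1 / q) ≤ barrlund q D x y :=
        le_ciSup (bddB y) p
      have step3 : (2 : ℝ) ^ (1 / q) * barrlund q D x y <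
          (2 : ℝ) ^ (1 / q) * (r / ((2 : ℝ) ^ (1 / q) * (1 + r))) :=
        mul_lt_mul_of_pos_left hby h2q
      have step4 : (2 : ℝ) ^ (1 / q) * (r / ((2 : ℝ) ^ (1 / q) * (1 + r))) = r / (1 + r) := by
        rw [eq_div_iff (by linarith : (1 : ℝ) + r ≠ 0)]
        field_simp
      calc ‖x - y‖ / max A B
          ≤ (2 : ℝ) ^ (1 / q) * (‖x - y‖ / (A ^ q + B ^ q) ^ (1 / q)) := step1
        _ ≤ (2 : ℝ) ^ (1 / q) * barrlund q D x y :=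
            mul_le_mul_of_nonneg_left step2 h2q.le
        _ ≤ r / (1 + r) := by rw [← step4]; exact step3.le
    have : r / (1 + r) < r := by
      rw [div_lt_iff₀ (by linarith)]; nlinarith
    exact lt_of_le_of_lt key this
  · -- second inclusion
    rintro y ⟨hyD, hcy⟩
    refine ⟨hyD, ?_⟩
    set c := ctilde D x y with hc_def
    have hc0 : 0 ≤ c := by
      have hp := Classical.arbitrary (frontier D)
      refine le_trans ?_ (le_ciSup (bddC y) hp)
      positivity
    have h1c : 0 < 1 - c := by linarith
    have key : barrlund q D x y ≤ c / ((2 : ℝ) ^ (1 / q) * (1 - c)) := by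
      refine ciSup_le fun p => ?_
      set A := ‖x - (p : EuclideanSpace ℝ (Fin n))‖ with hA_def
      set B := ‖y - (p : EuclideanSpace ℝ (Fin n))‖ with hB_def
      set M := max A B with hM_def
      have hM : 0 < M := hMpos y p
      have hN : ‖x - y‖ ≤ c * M := by
        have hfp : ‖x - y‖ / M ≤ c := le_ciSup (bddC y) p
        calc ‖x - y‖ = (‖x - y‖ / M) * M := by field_simp
          _ ≤ c * M := mul_le_mul_of_nonneg_right hfp hM.le
      have htriA : M ≤ A + ‖x - y‖ := by
        refine max_le (le_add_of_nonneg_right (norm_nonneg _)) ?_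
        calc B = ‖y - x + (x - (p : EuclideanSpace ℝ (Fin n)))‖ := by
              rw [sub_add_sub_cancel]
          _ ≤ ‖y - x‖ + A := norm_add_le _ _
          _ = A + ‖x - y‖ := by rw [norm_sub_rev]; ring
      have htriB : M ≤ B + ‖x - y‖ := by
        refine max_le ?_ (le_add_of_nonneg_right (norm_nonneg _))
        calc A = ‖x - y + (y - (p : EuclideanSpace ℝ (Fin n)))‖ := by
              rw [sub_add_sub_cancel]
          _ ≤ ‖x - y‖ + B := norm_add_le _ _
          _ = B + ‖x - y‖ := by ring
      have hAlb : (1 - c) * M ≤ A := by nlinarith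
      have hBlb : (1 - c) * M ≤ B := by nlinarith
      have hSge : (2 : ℝ) ^ (1 / q) * ((1 - c) * M) ≤ (A ^ q + B ^ q) ^ (1 / q) :=
        aux_S_ge q hq (mul_nonneg h1c.le hM.le) hAlb hBlb
      have hden : (0 : ℝ) < (2 : ℝ) ^ (1 / q) * ((1 - c) * M) :=
        mul_pos h2q (mul_pos h1c hM)
      calc ‖x - y‖ / (A ^ q + B ^ q) ^ (1 / q)
          ≤ (c * M) / ((2 : ℝ) ^ (1 / q) * ((1 - c) * M)) :=
            div_le_div₀ (mul_nonneg hc0 hM.le) hN hden hSge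
        _ = c / ((2 : ℝ) ^ (1 / q) * (1 - c)) := by
            field_simp
    have hfinal : c / ((2 : ℝ) ^ (1 / q) * (1 - c)) < r / ((2 : ℝ) ^ (1 / q) * (1 - r)) := by
      rw [div_lt_div_iff₀ (mul_pos h2q h1c) (mul_pos h2q (by linarith : (0:ℝ) < 1 - r))]
      have h1 : c * (1 - r) < r * (1 - c) := by nlinarith
      nlinarith [mul_lt_mul_of_pos_left h1 h2q]
    exact lt_of_le_of_lt key hfinal
end

section
/- Let D ⊊ ℝⁿ be an open set with nonempty boundary ∂D, let x ∈ D and r ∈ (0,1). Then B_s(x, R₁) ⊆ B_{ĉ}(x, r) ⊆ B_s(x, R₂), where R₁ = r/(2(1+r)) and R₂ = r/(2(1−r)), and s_D is the triangular ratio metric. -/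
open Set Metric

/-- The triangular ratio metric: `s_D(x,y) = sup_{p ∈ ∂D} |x−y| / (|x−p| + |y−p|)`. -/
noncomputable def triRatio {E : Type*} [SeminormedAddCommGroup E] (D : Set E) (x y : E) : ℝ :=
  ⨆ p : frontier D, ‖x - y‖ / (‖x - (p : E)‖ + ‖y - (p : E)‖)

/-- Corollary: `B_s(x, r/(2(1+r))) ⊆ B_{ĉ}(x,r) ⊆ B_s(x, r/(2(1−r)))`. -/
theorem triRatio_ctilde_ball_inclusions {n : ℕ} (hn : 1 ≤ n)
    (D : Set (EuclideanSpace ℝ (Fin n))) (hD : IsOpen D) (hDproper : D ≠ Set.univ)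
    (hfr : (frontier D).Nonempty)
    (x : EuclideanSpace ℝ (Fin n)) (hx : x ∈ D) (r : ℝ) (hr0 : 0 < r) (hr1 : r < 1) :
    {y | y ∈ D ∧ triRatio D x y < r / (2 * (1 + r))} ⊆ {y | y ∈ D ∧ ctilde D x y < r} ∧
    {y | y ∈ D ∧ ctilde D x y < r} ⊆ {y | y ∈ D ∧ triRatio D x y < r / (2 * (1 - r))} := by
  haveI : Nonempty (frontier D) := hfr.to_subtype
  -- positivity of distances to boundary points
  have hxp : ∀ p : frontier D, 0 < ‖x - (p : EuclideanSpace ℝ (Fin n))‖ := by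
    intro p
    have hpD : (p : EuclideanSpace ℝ (Fin n)) ∉ D := fun h =>
      p.2.2 (by rwa [hD.interior_eq])
    have : x ≠ (p : EuclideanSpace ℝ (Fin n)) := fun h => hpD (h ▸ hx)
    simpa [sub_eq_zero] using this
  -- general facts for any y
  have tri : ∀ (y : EuclideanSpace ℝ (Fin n)) (p : frontier D),
      ‖x - y‖ ≤ ‖x - (p : EuclideanSpace ℝ (Fin n))‖ + ‖y - (p : EuclideanSpace ℝ (Fin n))‖ := by
    intro y p
    have : x - y = (x - (p : EuclideanSpace ℝ (Fin n))) - (y - (p : EuclideanSpace ℝ (Fin n))) := by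
      abel
    rw [this]
    exact norm_sub_le _ _
  have abssub : ∀ (y : EuclideanSpace ℝ (Fin n)) (p : frontier D),
      |‖x - (p : EuclideanSpace ℝ (Fin n))‖ - ‖y - (p : EuclideanSpace ℝ (Fin n))‖| ≤ ‖x - y‖ := by
    intro y p
    have h := abs_norm_sub_norm_le (x - (p : EuclideanSpace ℝ (Fin n)))
      (y - (p : EuclideanSpace ℝ (Fin n)))
    have he : (x - (p : EuclideanSpace ℝ (Fin n))) - (y - (p : EuclideanSpace ℝ (Fin n))) = x - y := by
      abel
    rwa [he] at h
  have bdd_s : ∀ y : EuclideanSpace ℝ (Fin n), BddAbove (Set.range fun p : frontier D =>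
      ‖x - y‖ / (‖x - (p : EuclideanSpace ℝ (Fin n))‖ + ‖y - (p : EuclideanSpace ℝ (Fin n))‖)) := by
    intro y
    refine ⟨1, ?_⟩
    rintro _ ⟨p, rfl⟩
    have hden : 0 < ‖x - (p : EuclideanSpace ℝ (Fin n))‖ + ‖y - (p : EuclideanSpace ℝ (Fin n))‖ :=
      lt_of_lt_of_le (hxp p) (le_add_of_nonneg_right (norm_nonneg _))
    rw [div_le_one hden]
    exact tri y p
  have bdd_c : ∀ y : EuclideanSpace ℝ (Fin n), BddAbove (Set.range fun p : frontier D =>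
      ‖x - y‖ / max ‖x - (p : EuclideanSpace ℝ (Fin n))‖ ‖y - (p : EuclideanSpace ℝ (Fin n))‖) := by
    intro y
    refine ⟨2, ?_⟩
    rintro _ ⟨p, rfl⟩
    have hm : 0 < max ‖x - (p : EuclideanSpace ℝ (Fin n))‖ ‖y - (p : EuclideanSpace ℝ (Fin n))‖ :=
      lt_of_lt_of_le (hxp p) (le_max_left _ _)
    rw [div_le_iff₀ hm]
    calc ‖x - y‖ ≤ ‖x - (p : EuclideanSpace ℝ (Fin n))‖ + ‖y - (p : EuclideanSpace ℝ (Fin n))‖ :=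
          tri y p
      _ ≤ 2 * max ‖x - (p : EuclideanSpace ℝ (Fin n))‖ ‖y - (p : EuclideanSpace ℝ (Fin n))‖ := by
          have h1 := le_max_left ‖x - (p : EuclideanSpace ℝ (Fin n))‖ ‖y - (p : EuclideanSpace ℝ (Fin n))‖
          have h2 := le_max_right ‖x - (p : EuclideanSpace ℝ (Fin n))‖ ‖y - (p : EuclideanSpace ℝ (Fin n))‖
          linarith
  constructor
  · rintro y ⟨hyD, hs⟩
    refine ⟨hyD, ?_⟩
    have key : ctilde D x y ≤ 2 * triRatio D x y := by
      apply ciSup_le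
      intro p
      set a := ‖x - (p : EuclideanSpace ℝ (Fin n))‖ with ha
      set b := ‖y - (p : EuclideanSpace ℝ (Fin n))‖ with hb
      set d := ‖x - y‖ with hd
      have hm : 0 < max a b := lt_of_lt_of_le (hxp p) (le_max_left _ _)
      have hab : 0 < a + b := lt_of_lt_of_le (hxp p) (le_add_of_nonneg_right (norm_nonneg _))
      have step1 : d / max a b ≤ 2 * (d / (a + b)) := by
        rw [mul_div_assoc', div_le_div_iff₀ hm hab]
        have h1 : a ≤ max a b := le_max_left _ _
        have h2 : b ≤ max a b := le_max_right _ _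
        nlinarith [norm_nonneg (x - y)]
      refine step1.trans ?_
      have step2 : d / (a + b) ≤ triRatio D x y := le_ciSup (bdd_s y) p
      linarith
    have : 2 * triRatio D x y < 2 * (r / (2 * (1 + r))) := by linarith
    have h2 : 2 * (r / (2 * (1 + r))) = r / (1 + r) := by
      field_simp
    have h3 : r / (1 + r) < r := by
      rw [div_lt_iff₀ (by linarith)]
      nlinarith
    linarith [key]
  · rintro y ⟨hyD, hc⟩
    refine ⟨hyD, ?_⟩
    have key : triRatio D x y ≤ r / (2 - r) := by
      apply ciSup_le
      intro p
      set a := ‖x - (p : EuclideanSpace ℝ (Fin n))‖ with ha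
      set b := ‖y - (p : EuclideanSpace ℝ (Fin n))‖ with hb
      set d := ‖x - y‖ with hd
      have hm : 0 < max a b := lt_of_lt_of_le (hxp p) (le_max_left _ _)
      have hab : 0 < a + b := lt_of_lt_of_le (hxp p) (le_add_of_nonneg_right (norm_nonneg _))
      have hdm : d / max a b < r := lt_of_le_of_lt (le_ciSup (bdd_c y) p) hc
      have hd' : d < r * max a b := by
        rw [div_lt_iff₀ hm] at hdm
        linarith
      have hmin : max a b - d ≤ min a b := by
        have h1 : max a b - min a b = |b - a| := max_sub_min_eq_abs a b
        have h2 : |a - b| ≤ d := abssub y p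
        rw [abs_sub_comm] at h2
        linarith
      have hsum : 2 * max a b - d ≤ a + b := by
        have := max_add_min a b
        linarith
      rw [div_le_div_iff₀ hab (by linarith : (0:ℝ) < 2 - r)]
      nlinarith [norm_nonneg (x - y), hm.le]
    have h4 : r / (2 - r) < r / (2 * (1 - r)) := by
      apply div_lt_div_of_pos_left hr0 (by linarith)
      linarith
    linarith
end

section
/- Let D ⊊ ℝⁿ be an open set with nonempty boundary ∂D, let x ∈ D and r ∈ (0,1). Then B_c(x, R₁) ⊆ B_{ĉ}(x, r) ⊆ B_c(x, R₂), where R₁ = r/((1+r)·d(x)), R₂ = r/((1−r)·d(x)), d(x) = dist(x,∂D), and c_D is the Cassinian metric. -/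
open Set Metric

/-- Theorem: `B_c(x, r/((1+r)d(x))) ⊆ B_{ĉ}(x,r) ⊆ B_c(x, r/((1−r)d(x)))`. -/
theorem cassinian_ctilde_ball_inclusions {n : ℕ} (hn : 1 ≤ n)
    (D : Set (EuclideanSpace ℝ (Fin n))) (hD : IsOpen D) (hDproper : D ≠ Set.univ)
    (hfr : (frontier D).Nonempty)
    (x : EuclideanSpace ℝ (Fin n)) (hx : x ∈ D) (r : ℝ) (hr0 : 0 < r) (hr1 : r < 1) :
    {y | y ∈ D ∧ cassinian D x y < r / ((1 + r) * infDist x (frontier D))} ⊆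
      {y | y ∈ D ∧ ctilde D x y < r} ∧
    {y | y ∈ D ∧ ctilde D x y < r} ⊆
      {y | y ∈ D ∧ cassinian D x y < r / ((1 - r) * infDist x (frontier D))} := by
  have hFc : IsClosed (frontier D) := isClosed_frontier
  have hxF : x ∉ frontier D := by
    intro h
    have := hD.inter_frontier_eq
    exact absurd this (by simp [Set.eq_empty_iff_forall_notMem]; exact ⟨x, hx, h⟩)
  have hd : 0 < infDist x (frontier D) :=
    (hFc.notMem_iff_infDist_pos hfr).1 hxF
  set d := infDist x (frontier D) with hddef
  have hdist : ∀ p ∈ frontier D, d ≤ ‖x - p‖ := by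
    intro p hp
    simpa [dist_eq_norm] using infDist_le_dist_of_mem (x := x) hp
  -- positivity of distances from any point of D to the frontier
  have hmemD : ∀ z ∈ D, ∀ p ∈ frontier D, 0 < ‖z - p‖ := by
    intro z hz p hp
    have hzF : z ∉ frontier D := by
      intro h
      have := hD.inter_frontier_eq
      exact absurd this (by simp [Set.eq_empty_iff_forall_notMem]; exact ⟨z, hz, h⟩)
    have : z ≠ p := fun h => hzF (h ▸ hp)
    simpa [sub_eq_zero] using this
  have hne : Nonempty (frontier D) := hfr.to_subtype
  constructor
  · rintro y ⟨hyD, hcy⟩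
    refine ⟨hyD, ?_⟩
    set t := ‖x - y‖ with htdef
    have ht0 : 0 ≤ t := norm_nonneg _
    -- nearest point
    obtain ⟨p₀, hp₀F, hp₀⟩ := hFc.exists_infDist_eq_dist hfr x
    have hxp₀ : ‖x - p₀‖ = d := by rw [hddef, hp₀, dist_eq_norm]
    have hyp₀ : ‖y - p₀‖ ≤ t + d := by
      have h := dist_triangle y x p₀
      simp only [dist_eq_norm] at h
      rw [norm_sub_rev y x] at h
      linarith [hxp₀ ▸ h]
    -- the term at p₀ is ≤ cassinian
    have hbdd : BddAbove (Set.range fun p : frontier D =>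
        ‖x - y‖ / (‖x - (p : _)‖ * ‖y - (p : _)‖)) := by
      have hdy : 0 < infDist y (frontier D) := by
        refine (hFc.notMem_iff_infDist_pos hfr).1 ?_
        intro h
        exact absurd hD.inter_frontier_eq
          (by simp [Set.eq_empty_iff_forall_notMem]; exact ⟨y, hyD, h⟩)
      refine ⟨t / (d * infDist y (frontier D)), ?_⟩
      rintro _ ⟨p, rfl⟩
      have h1 := hdist p p.2
      have h2 : infDist y (frontier D) ≤ ‖y - (p : _)‖ := by
        simpa [dist_eq_norm] using infDist_le_dist_of_mem (x := y) p.2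
      have hx' := hmemD x hx p p.2
      have hy' := hmemD y hyD p p.2
      apply div_le_div_of_nonneg_left ht0 (by positivity)
      exact mul_le_mul h1 h2 hdy.le (norm_nonneg _)
    have hterm : t / (‖x - p₀‖ * ‖y - p₀‖) ≤ cassinian D x y :=
      le_ciSup hbdd ⟨p₀, hp₀F⟩
    -- derive t < r * d
    have htr : t < r * d := by
      by_contra hcon
      push_neg at hcon
      have ht0' : 0 < t := lt_of_lt_of_le (by positivity) hcon
      have hyp₀' : 0 < ‖y - p₀‖ := hmemD y hyD p₀ hp₀F
      have h1 : t / (d * (t + d)) ≤ t / (‖x - p₀‖ * ‖y - p₀‖) := by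
        apply div_le_div_of_nonneg_left ht0 (by rw [hxp₀]; positivity)
        rw [hxp₀]
        exact mul_le_mul_of_nonneg_left hyp₀ hd.le
      have h2 : t / (d * (t + d)) < r / ((1 + r) * d) :=
        lt_of_le_of_lt (h1.trans hterm) hcy
      rw [div_lt_div_iff₀ (by positivity) (by positivity)] at h2
      nlinarith
    -- conclude ctilde < r
    have : ctilde D x y ≤ t / d := by
      apply ciSup_le
      intro p
      have h1 := hdist p p.2
      have hx' := hmemD x hx p p.2
      apply div_le_div_of_nonneg_left ht0 (by positivity)
      exact le_max_of_le_left h1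
    calc ctilde D x y ≤ t / d := this
      _ < r := by rw [div_lt_iff₀ hd]; linarith
  · rintro y ⟨hyD, hcy⟩
    refine ⟨hyD, ?_⟩
    set t := ‖x - y‖ with htdef
    have ht0 : 0 ≤ t := norm_nonneg _
    set c₀ := ctilde D x y with hc₀def
    have hc₀0 : 0 ≤ c₀ := by
      apply Real.iSup_nonneg
      intro p
      positivity
    have hc₀r : c₀ < r := hcy
    have h1c₀ : 0 < 1 - c₀ := by linarith
    -- each term of ctilde ≤ c₀
    have hbdd : BddAbove (Set.range fun p : frontier D =>
        ‖x - y‖ / max ‖x - (p : _)‖ ‖y - (p : _)‖) := by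
      refine ⟨t / d, ?_⟩
      rintro _ ⟨p, rfl⟩
      have h1 := hdist p p.2
      have hx' := hmemD x hx p p.2
      apply div_le_div_of_nonneg_left ht0 (by positivity)
      exact le_max_of_le_left h1
    have hterm : ∀ p : frontier D, t / max ‖x - (p : _)‖ ‖y - (p : _)‖ ≤ c₀ :=
      fun p => le_ciSup hbdd p
    -- cassinian ≤ c₀ / ((1 - c₀) * d)
    have hcas : cassinian D x y ≤ c₀ / ((1 - c₀) * d) := by
      apply ciSup_le
      intro p
      set a := ‖x - (p : _)‖ with hadef
      set b := ‖y - (p : _)‖ with hbdef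
      have ha : 0 < a := hmemD x hx p p.2
      have hb : 0 < b := hmemD y hyD p p.2
      have had : d ≤ a := hdist p p.2
      have habt : b ≤ t + a := by
        have h := dist_triangle y x (p : EuclideanSpace ℝ (Fin n))
        simp only [dist_eq_norm] at h
        rw [norm_sub_rev y x] at h
        linarith
      have habt' : a ≤ t + b := by
        have h := dist_triangle x y (p : EuclideanSpace ℝ (Fin n))
        simp only [dist_eq_norm] at h
        linarith
      have hmax : t ≤ c₀ * max a b := by
        have := hterm p
        rw [div_le_iff₀ (lt_max_of_lt_left ha)] at this
        linarith [this]
      rw [div_le_div_iff₀ (by positivity) (by positivity)]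
      rcases le_total b a with hba | hab
      · -- max = a, so t ≤ c₀ a, and b ≥ a - t ≥ (1-c₀) a ≥ (1-c₀) d
        rw [max_eq_left hba] at hmax
        have hbge : (1 - c₀) * d ≤ b := by nlinarith
        nlinarith
      · rw [max_eq_right hab] at hmax
        have hage : (1 - c₀) * d ≤ a := by nlinarith
        nlinarith
    have hlt : c₀ / ((1 - c₀) * d) < r / ((1 - r) * d) := by
      rw [div_lt_div_iff₀ (by positivity) (mul_pos (by linarith) hd)]
      nlinarith
    exact hcas.trans_lt hlt
end

section
/- Let D ⊊ ℝⁿ be an open set with nonempty boundary ∂D, let x ∈ D and r ∈ (0,1). Then B_j(x, R₁) ⊆ B_{ĉ}(x, r) ⊆ B_j(x, R₂), where R₁ = log(1+r), R₂ = log(1 + r/(1−r)), and j_D is the distance ratio metric. -/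
open Set Metric

/-- The distance ratio metric: `j_D(x,y) = log(1 + |x−y| / min(d(x), d(y)))`. -/
noncomputable def jmetric {E : Type*} [SeminormedAddCommGroup E] (D : Set E) (x y : E) : ℝ :=
  Real.log (1 + ‖x - y‖ / min (infDist x (frontier D)) (infDist y (frontier D)))

private lemma key_aux {E : Type*} [SeminormedAddCommGroup E] (F : Set E) (hF : F.Nonempty)
    (x y : E) (c : ℝ) (hc0 : 0 ≤ c) (hc1 : c ≤ 1)
    (h : ∀ p ∈ F, ‖x - y‖ / max ‖x - p‖ ‖y - p‖ ≤ c) :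
    ‖x - y‖ * (1 - c) ≤ c * infDist x F := by
  apply le_of_forall_pos_le_add
  intro ε hε
  obtain ⟨p, hpF, hp⟩ := (infDist_lt_iff hF).mp (lt_add_of_pos_right (infDist x F) hε)
  rw [dist_eq_norm] at hp
  set M := max ‖x - p‖ ‖y - p‖ with hM
  have hM0 : 0 ≤ M := le_trans (norm_nonneg _) (le_max_left _ _)
  have hxy : ‖x - y‖ ≤ c * M := by
    rcases eq_or_lt_of_le hM0 with hM0' | hM0'
    · have h1 : ‖x - p‖ = 0 := le_antisymm (le_trans (le_max_left _ _) hM0'.symm.le) (norm_nonneg _)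
      have h2 : ‖y - p‖ = 0 := le_antisymm (le_trans (le_max_right _ _) hM0'.symm.le) (norm_nonneg _)
      have : ‖x - y‖ ≤ ‖x - p‖ + ‖y - p‖ := by
        calc ‖x - y‖ ≤ ‖x - p‖ + ‖p - y‖ := norm_sub_le_norm_sub_add_norm_sub x p y
        _ = ‖x - p‖ + ‖y - p‖ := by rw [norm_sub_rev p y]
      nlinarith [norm_nonneg (x - y)]
    · exact (div_le_iff₀ hM0').mp (h p hpF)
  have hMle : M ≤ ‖x - p‖ + ‖x - y‖ := by
    apply max_le
    · linarith [norm_nonneg (x - y)]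
    · calc ‖y - p‖ ≤ ‖y - x‖ + ‖x - p‖ := norm_sub_le_norm_sub_add_norm_sub y x p
        _ = ‖x - p‖ + ‖x - y‖ := by rw [norm_sub_rev y x]; ring
  nlinarith [norm_nonneg (x - y)]

/-- Theorem: `B_j(x, log(1+r)) ⊆ B_{ĉ}(x,r) ⊆ B_j(x, log(1 + r/(1−r)))`. -/
theorem jmetric_ctilde_ball_inclusions {n : ℕ} (hn : 1 ≤ n)
    (D : Set (EuclideanSpace ℝ (Fin n))) (hD : IsOpen D) (hDproper : D ≠ Set.univ)
    (hfr : (frontier D).Nonempty)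
    (x : EuclideanSpace ℝ (Fin n)) (hx : x ∈ D) (r : ℝ) (hr0 : 0 < r) (hr1 : r < 1) :
    {y | y ∈ D ∧ jmetric D x y < Real.log (1 + r)} ⊆ {y | y ∈ D ∧ ctilde D x y < r} ∧
    {y | y ∈ D ∧ ctilde D x y < r} ⊆
      {y | y ∈ D ∧ jmetric D x y < Real.log (1 + r / (1 - r))} := by
  haveI : Nonempty (frontier D) := hfr.to_subtype
  set F := frontier D with hF
  have hFc : IsClosed F := isClosed_frontier
  have hdpos : ∀ z ∈ D, 0 < infDist z F := by
    intro z hz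
    rw [← hFc.notMem_iff_infDist_pos hfr]
    intro hzF
    exact hzF.2 (by rwa [hD.interior_eq])
  have hdx : 0 < infDist x F := hdpos x hx
  constructor
  · rintro y ⟨hy, hj⟩
    refine ⟨hy, ?_⟩
    have hdy : 0 < infDist y F := hdpos y hy
    set m := min (infDist x F) (infDist y F) with hm
    have hm0 : 0 < m := lt_min hdx hdy
    have ht0 : 0 ≤ ‖x - y‖ / m := div_nonneg (norm_nonneg _) hm0.le
    have htr : ‖x - y‖ / m < r := by
      have := (Real.log_lt_log_iff (by linarith) (by linarith)).mp hj
      linarith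
    refine lt_of_le_of_lt ?_ htr
    apply ciSup_le
    rintro ⟨p, hp⟩
    have h1 : m ≤ max ‖x - p‖ ‖y - p‖ := by
      refine le_trans (min_le_left _ _) (le_trans ?_ (le_max_left _ _))
      rw [← dist_eq_norm]
      exact infDist_le_dist_of_mem hp
    gcongr
  · rintro y ⟨hy, hc⟩
    refine ⟨hy, ?_⟩
    have hdy : 0 < infDist y F := hdpos y hy
    set m := min (infDist x F) (infDist y F) with hm
    have hm0 : 0 < m := lt_min hdx hdy
    set c := ctilde D x y with hcdef
    have hterm : ∀ p : F, ‖x - y‖ / max ‖x - (p : _)‖ ‖y - (p : _)‖ ≤ c := by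
      intro p
      apply le_ciSup (f := fun p : F => ‖x - y‖ / max ‖x - (p : _)‖ ‖y - (p : _)‖)
      refine ⟨‖x - y‖ / m, ?_⟩
      rintro _ ⟨⟨q, hq⟩, rfl⟩
      have h1 : m ≤ max ‖x - q‖ ‖y - q‖ := by
        refine le_trans (min_le_left _ _) (le_trans ?_ (le_max_left _ _))
        rw [← dist_eq_norm]
        exact infDist_le_dist_of_mem hq
      show ‖x - y‖ / max ‖x - q‖ ‖y - q‖ ≤ ‖x - y‖ / m
      gcongr
    have hc0 : 0 ≤ c :=
      Real.iSup_nonneg fun p => div_nonneg (norm_nonneg _)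
        (le_trans (norm_nonneg _) (le_max_left _ _))
    have hkey : ‖x - y‖ * (1 - c) ≤ c * m := by
      rcases min_cases (infDist x F) (infDist y F) with ⟨hmeq, _⟩ | ⟨hmeq, _⟩
      · rw [hm, hmeq]
        exact key_aux F hfr x y c hc0 (by linarith) fun p hp => hterm ⟨p, hp⟩
      · rw [hm, hmeq]
        have : ‖y - x‖ * (1 - c) ≤ c * infDist y F := by
          refine key_aux F hfr y x c hc0 (by linarith) fun p hp => ?_
          have := hterm ⟨p, hp⟩
          rwa [norm_sub_rev x y, max_comm] at this
        rwa [norm_sub_rev y x] at this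
    have hmain : ‖x - y‖ * (1 - r) < r * m := by
      nlinarith [norm_nonneg (x - y)]
    have htlt : ‖x - y‖ / m < r / (1 - r) := by
      rw [div_lt_div_iff₀ hm0 (by linarith)]
      linarith [hmain]
    have ht0 : 0 ≤ ‖x - y‖ / m := div_nonneg (norm_nonneg _) hm0.le
    exact Real.log_lt_log (by linarith) (by linarith)
end

section
/- Let H = {z ∈ ℂ : Im z > 0} be the upper half-plane, let ρ denote the hyperbolic metric on H (the metric satisfying cosh(ρ(x,y)/2) = 1 + |x−y|²/(2·Im x·Im y)), let x ∈ H and r ∈ (0,1). Then B_ρ(x, R₁) ⊆ B_{ĉ}(x, r) ⊆ B_ρ(x, R₂), where R₁ = log(1+r) and R₂ = 2·log(1 + r/(1−r)). -/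
open Set Metric

/-- The upper half-plane `H = {z ∈ ℂ : Im z > 0}`. -/
def upperHalf : Set ℂ := {z : ℂ | 0 < z.im}

/-!
With `q = ‖x - y‖² / (Im x · Im y)` we have `cosh (ρ/2) = 1 + q/2`, so both `ρ`-balls are
sublevel sets of `q`. Every boundary point `p` satisfies `‖z - p‖ ≥ Im z`, hence
`ĉ(x, y) ≤ ‖x - y‖ / max (Im x) (Im y) ≤ √q`. Conversely, if `Im x ≤ Im y`, testing `ĉ` at the
foot `p = Re x` of `x` gives `‖x - y‖ < r ‖y - p‖`, and an elementary inequality between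
`‖y - p‖`, `‖x - y‖` and `Im x · Im y` turns this into `q (1 - r) < r²`. It remains to compare
`1 + q/2` with `cosh (log (1 + r) / 2)` and with `cosh (log (1 / (1 - r)))`.
-/

open Real

lemma ctilde_comm {E : Type*} [SeminormedAddCommGroup E] (D : Set E) (x y : E) :
    ctilde D x y = ctilde D y x := by
  unfold ctilde
  congr 1 with p
  rw [norm_sub_rev, max_comm]

section
variable {E : Type*} [SeminormedAddCommGroup E] {D : Set E} {x y : E} {c : ℝ}

lemma bddAbove_ctilde (hc : 0 < c) (h : ∀ p ∈ frontier D, c ≤ max ‖x - p‖ ‖y - p‖) :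
    BddAbove (range fun p : frontier D =>
      ‖x - y‖ / max ‖x - (p : E)‖ ‖y - (p : E)‖) := by
  refine ⟨‖x - y‖ / c, ?_⟩
  rintro _ ⟨p, rfl⟩
  exact div_le_div_of_nonneg_left (norm_nonneg _) hc (h p p.2)

lemma ctilde_le (hc : 0 < c) (h : ∀ p ∈ frontier D, c ≤ max ‖x - p‖ ‖y - p‖) :
    ctilde D x y ≤ ‖x - y‖ / c :=
  Real.iSup_le (fun p => div_le_div_of_nonneg_left (norm_nonneg _) hc (h p p.2))
    (by positivity)

end

lemma frontier_upperHalf : frontier upperHalf = {z : ℂ | z.im = 0} :=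
  Complex.frontier_setOfPred_lt_im 0

lemma im_le_norm_sub_of_im_eq_zero (z : ℂ) {p : ℂ} (hp : p.im = 0) : z.im ≤ ‖z - p‖ := by
  simpa [hp] using (le_abs_self _).trans (Complex.abs_im_le_norm (z - p))

lemma max_im_le_max_norm_sub (x y : ℂ) :
    ∀ p ∈ frontier upperHalf, max x.im y.im ≤ max ‖x - p‖ ‖y - p‖ := by
  rw [frontier_upperHalf]
  exact fun p hp =>
    max_le_max (im_le_norm_sub_of_im_eq_zero x hp) (im_le_norm_sub_of_im_eq_zero y hp)

/-- With `p = Re x`, this is the square root of the identity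
`‖y - p‖²‖x - y‖² - (‖y - p‖² - Im x Im y)² = (Im x · Re (y - x))²`. -/
lemma sq_norm_sub_ofReal_re_le (x y : ℂ) :
    ‖y - x.re‖ ^ 2 ≤ x.im * y.im + ‖y - x.re‖ * ‖x - y‖ := by
  set M := ‖y - x.re‖
  set t := ‖x - y‖
  have hM : M ^ 2 = (y.re - x.re) ^ 2 + y.im ^ 2 := by
    simp only [M, Complex.sq_norm, Complex.normSq_apply, Complex.sub_re, Complex.sub_im,
      Complex.ofReal_re, Complex.ofReal_im]
    ring
  have ht : t ^ 2 = (y.re - x.re) ^ 2 + (x.im - y.im) ^ 2 := by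
    simp only [t, Complex.sq_norm, Complex.normSq_apply, Complex.sub_re, Complex.sub_im]
    ring
  have hsq : (M ^ 2 - x.im * y.im) ^ 2 ≤ (M * t) ^ 2 := by
    rw [mul_pow, hM, ht]
    nlinarith [sq_nonneg ((y.re - x.re) * x.im)]
  nlinarith [abs_le_of_sq_le_sq' hsq (by positivity)]

lemma sq_norm_sub_mul_one_sub_lt_of_ctilde_lt {x y : ℂ} (hx : 0 < x.im) (hxy : x.im ≤ y.im)
    {r : ℝ} (hr : r < 1) (h : ctilde upperHalf x y < r) :
    ‖x - y‖ ^ 2 * (1 - r) < r ^ 2 * (x.im * y.im) := by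
  set M := ‖y - x.re‖
  set t := ‖x - y‖
  have hyM : y.im ≤ M := im_le_norm_sub_of_im_eq_zero y (Complex.ofReal_im _)
  have hxre : ‖x - x.re‖ = x.im := by
    have : x - x.re = x.im * Complex.I := Complex.ext (by simp) (by simp)
    simp [this, abs_of_pos hx]
  have hMpos : 0 < M := hx.trans_le (hxy.trans hyM)
  have hfoot : (x.re : ℂ) ∈ frontier upperHalf := by
    rw [frontier_upperHalf]
    exact Complex.ofReal_im _
  have htM : t / M ≤ ctilde upperHalf x y := by
    have := le_ciSup (bddAbove_ctilde (hx.trans_le (le_max_left _ _))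
      (max_im_le_max_norm_sub x y)) ⟨_, hfoot⟩
    rwa [hxre, max_eq_right (hxy.trans hyM)] at this
  have htr : t < r * M := (div_lt_iff₀ hMpos).1 (htM.trans_lt h)
  -- with `M² ≤ Im x Im y + M t`: `r² Im x Im y - t² (1 - r) ≥ (r M - t) (r M + t (1 - r))`
  have hfac : 0 < (r * M - t) * (r * M + t * (1 - r)) :=
    mul_pos (sub_pos.2 htr) (by nlinarith [norm_nonneg (x - y)])
  nlinarith [mul_le_mul_of_nonneg_left (sq_norm_sub_ofReal_re_le x y) (sq_nonneg r)]

lemma div_mul_one_sub_lt_of_ctilde_upperHalf_lt {x y : ℂ} (hx : 0 < x.im) (hy : 0 < y.im)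
    {r : ℝ} (hr : r < 1) (h : ctilde upperHalf x y < r) :
    ‖x - y‖ ^ 2 / (x.im * y.im) * (1 - r) < r ^ 2 := by
  rw [div_mul_eq_mul_div, div_lt_iff₀ (mul_pos hx hy)]
  rcases le_total x.im y.im with hxy | hyx
  · exact sq_norm_sub_mul_one_sub_lt_of_ctilde_lt hx hxy hr h
  · rw [ctilde_comm] at h
    simpa only [norm_sub_rev, mul_comm y.im] using
      sq_norm_sub_mul_one_sub_lt_of_ctilde_lt hy hyx hr h

lemma ctilde_upperHalf_lt_of_div_lt {x y : ℂ} (hx : 0 < x.im) (hy : 0 < y.im) {r : ℝ}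
    (hr : 0 ≤ r) (h : ‖x - y‖ ^ 2 / (x.im * y.im) < r ^ 2) : ctilde upperHalf x y < r := by
  have hm : 0 < max x.im y.im := lt_max_of_lt_left hx
  have hprod : x.im * y.im ≤ max x.im y.im ^ 2 := by
    rw [sq]
    exact mul_le_mul (le_max_left _ _) (le_max_right _ _) hy.le hm.le
  have hsq : ‖x - y‖ ^ 2 < (r * max x.im y.im) ^ 2 := by
    rw [div_lt_iff₀ (mul_pos hx hy)] at h
    nlinarith
  refine (ctilde_le hm (max_im_le_max_norm_sub x y)).trans_lt ?_
  rw [div_lt_iff₀ hm]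
  exact lt_of_pow_lt_pow_left₀ 2 (by positivity) hsq

lemma lt_sq_of_one_add_half_lt_cosh_half_log {q r : ℝ} (hr : 0 ≤ r)
    (h : 1 + q / 2 < cosh (log (1 + r) / 2)) : q < r ^ 2 := by
  have hs : 1 ≤ √(1 + r) := by simpa using Real.sqrt_le_sqrt (by linarith : (1 : ℝ) ≤ 1 + r)
  have hs2 : √(1 + r) ^ 2 = 1 + r := Real.sq_sqrt (by linarith)
  rw [← Real.log_sqrt (by linarith), cosh_log (by linarith)] at h
  set s := √(1 + r)
  -- `2 cosh (log s) - 2 = (s - 1)² / s`, while `r² = (s - 1)² (s + 1)²`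
  have : q < (s - 1) ^ 2 / s := by
    rw [lt_div_iff₀ (by linarith)]
    field_simp at h
    nlinarith
  calc q < (s - 1) ^ 2 / s := this
    _ ≤ (s - 1) ^ 2 := div_le_self (sq_nonneg _) hs
    _ ≤ r ^ 2 := by nlinarith [sq_nonneg (s - 1)]

lemma one_add_half_lt_cosh_log_inv_one_sub {q r : ℝ} (hr : r < 1) (h : q * (1 - r) < r ^ 2) :
    1 + q / 2 < cosh (2 * log (1 + r / (1 - r)) / 2) := by
  have h1r : 0 < 1 - r := sub_pos.2 hr
  have hw : 1 + r / (1 - r) = (1 - r)⁻¹ := by field_simp; ring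
  rw [mul_div_cancel_left₀ _ two_ne_zero, hw, cosh_log (inv_pos.2 h1r), inv_inv]
  have : q < r ^ 2 / (1 - r) := (lt_div_iff₀ h1r).2 h
  rw [show (1 - r)⁻¹ = 1 + r + r ^ 2 / (1 - r) by field_simp; ring]
  linarith

/-- Theorem: if `ρ` is the hyperbolic metric of the upper half-plane `H`, characterized by
`ρ ≥ 0` and `cosh(ρ(x,y)/2) = 1 + |x−y|²/(2·Im x·Im y)`, then for `x ∈ H` and `0 < r < 1`,
`B_ρ(x, log(1+r)) ⊆ B_{ĉ}(x, r) ⊆ B_ρ(x, 2·log(1 + r/(1−r)))`. -/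
theorem hyperbolic_ctilde_ball_inclusions (ρ : ℂ → ℂ → ℝ)
    (hρ0 : ∀ x ∈ upperHalf, ∀ y ∈ upperHalf, 0 ≤ ρ x y)
    (hρ : ∀ x ∈ upperHalf, ∀ y ∈ upperHalf,
      Real.cosh (ρ x y / 2) = 1 + ‖x - y‖ ^ 2 / (2 * x.im * y.im))
    (x : ℂ) (hx : x ∈ upperHalf) (r : ℝ) (hr0 : 0 < r) (hr1 : r < 1) :
    {y | y ∈ upperHalf ∧ ρ x y < Real.log (1 + r)} ⊆
      {y | y ∈ upperHalf ∧ ctilde upperHalf x y < r} ∧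
    {y | y ∈ upperHalf ∧ ctilde upperHalf x y < r} ⊆
      {y | y ∈ upperHalf ∧ ρ x y < 2 * Real.log (1 + r / (1 - r))} := by
  have hρ_lt : ∀ y ∈ upperHalf, ∀ R, 0 ≤ R →
      (ρ x y < R ↔ 1 + ‖x - y‖ ^ 2 / (x.im * y.im) / 2 < cosh (R / 2)) := by
    intro y hy R hR
    have hρy := hρ0 x hx y hy
    rw [show 1 + ‖x - y‖ ^ 2 / (x.im * y.im) / 2 = cosh (ρ x y / 2) by
        rw [hρ x hx y hy]; ring,
      cosh_strictMonoOn.lt_iff_lt (mem_Ici.2 (by linarith)) (mem_Ici.2 (by linarith))]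
    exact (div_lt_div_iff_of_pos_right two_pos).symm
  have hlog : 0 ≤ log (1 + r / (1 - r)) :=
    log_nonneg (le_add_of_nonneg_right (div_nonneg hr0.le (sub_pos.2 hr1).le))
  refine ⟨fun y ⟨hy, hρy⟩ => ⟨hy, ?_⟩, fun y ⟨hy, hcy⟩ => ⟨hy, ?_⟩⟩
  · have hcosh := (hρ_lt y hy _ (log_nonneg (by linarith))).1 hρy
    exact ctilde_upperHalf_lt_of_div_lt hx hy hr0.le
      (lt_sq_of_one_add_half_lt_cosh_half_log hr0.le hcosh)
  · exact (hρ_lt y hy _ (mul_nonneg zero_le_two hlog)).2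
      (one_add_half_lt_cosh_log_inv_one_sub hr1
        (div_mul_one_sub_lt_of_ctilde_upperHalf_lt hx hy hr1 hcy))
end

section
/- Let c ≥ 2, let D ⊊ ℝⁿ be an open set with nonempty boundary ∂D, let x ∈ D and r ∈ (0,1). Then B_{h_{D,c}}(x, R₁) ⊆ B_{ĉ}(x, r) ⊆ B_{h_{D,c}}(x, R₂), where R₁ = log(1+c·r) and R₂ = log(1 + c·r/(1−r)). -/
open Set Metric

/-- The metric `h_{D,c}(x,y) = log(1 + c·|x−y|/√(d(x)·d(y)))`. -/
noncomputable def hMetric {E : Type*} [SeminormedAddCommGroup E] (c : ℝ) (D : Set E)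
    (x y : E) : ℝ :=
  Real.log (1 + c * ‖x - y‖ / Real.sqrt (infDist x (frontier D) * infDist y (frontier D)))

/-- Theorem: for `c ≥ 2` and `0 < r < 1`,
`B_{h_{D,c}}(x, log(1+cr)) ⊆ B_{ĉ}(x, r) ⊆ B_{h_{D,c}}(x, log(1 + cr/(1−r)))`. -/
theorem hMetric_ctilde_ball_inclusions {n : ℕ} (hn : 1 ≤ n) (c : ℝ) (hc : 2 ≤ c)
    (D : Set (EuclideanSpace ℝ (Fin n))) (hD : IsOpen D) (hDproper : D ≠ Set.univ)
    (hfr : (frontier D).Nonempty)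
    (x : EuclideanSpace ℝ (Fin n)) (hx : x ∈ D) (r : ℝ) (hr0 : 0 < r) (hr1 : r < 1) :
    {y | y ∈ D ∧ hMetric c D x y < Real.log (1 + c * r)} ⊆
      {y | y ∈ D ∧ ctilde D x y < r} ∧
    {y | y ∈ D ∧ ctilde D x y < r} ⊆
      {y | y ∈ D ∧ hMetric c D x y < Real.log (1 + c * r / (1 - r))} := by
  have hc0 : (0:ℝ) < c := lt_of_lt_of_le two_pos hc
  have hfrC : IsClosed (frontier D) := isClosed_frontier
  haveI : Nonempty (frontier D) := hfr.to_subtype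
  have hdpos : ∀ z ∈ D, 0 < infDist z (frontier D) := by
    intro z hz
    have hznf : z ∉ frontier D := by
      rw [hD.frontier_eq]
      exact fun h => h.2 hz
    exact (hfrC.notMem_iff_infDist_pos hfr).mp hznf
  have hdx := hdpos x hx
  have hxle : ∀ p : frontier D, infDist x (frontier D) ≤ ‖x - (p : EuclideanSpace ℝ (Fin n))‖ := by
    intro p
    rw [← dist_eq_norm]
    exact infDist_le_dist_of_mem p.2
  constructor
  · rintro y ⟨hyD, hy⟩
    refine ⟨hyD, ?_⟩
    have hdy := hdpos y hyD
    have hspos : 0 < Real.sqrt (infDist x (frontier D) * infDist y (frontier D)) :=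
      Real.sqrt_pos.mpr (mul_pos hdx hdy)
    have hterm : 0 ≤ c * ‖x - y‖ / Real.sqrt (infDist x (frontier D) * infDist y (frontier D)) :=
      by positivity
    rw [hMetric, Real.log_lt_log_iff (by linarith) (by positivity)] at hy
    have hlt : c * ‖x - y‖ / Real.sqrt (infDist x (frontier D) * infDist y (frontier D))
        < c * r := by linarith
    have hxy : ‖x - y‖ < r * Real.sqrt (infDist x (frontier D) * infDist y (frontier D)) := by
      rw [div_lt_iff₀ hspos] at hlt
      nlinarith
    -- sqrt(dx*dy) ≤ max dx dy
    have hsqrt_le : Real.sqrt (infDist x (frontier D) * infDist y (frontier D))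
        ≤ max (infDist x (frontier D)) (infDist y (frontier D)) := by
      rw [show max (infDist x (frontier D)) (infDist y (frontier D))
          = Real.sqrt ((max (infDist x (frontier D)) (infDist y (frontier D)))^2) from
        (Real.sqrt_sq (le_max_of_le_left hdx.le)).symm]
      apply Real.sqrt_le_sqrt
      nlinarith [le_max_left (infDist x (frontier D)) (infDist y (frontier D)),
        le_max_right (infDist x (frontier D)) (infDist y (frontier D))]
    have hyle : ∀ p : frontier D,
        infDist y (frontier D) ≤ ‖y - (p : EuclideanSpace ℝ (Fin n))‖ := by
      intro p
      rw [← dist_eq_norm]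
      exact infDist_le_dist_of_mem p.2
    refine lt_of_le_of_lt (ciSup_le fun p => ?_)
      (show ‖x - y‖ / max (infDist x (frontier D)) (infDist y (frontier D)) < r from ?_)
    · apply div_le_div_of_nonneg_left (norm_nonneg _)
        (lt_max_of_lt_left hdx)
      exact max_le_max (hxle p) (hyle p)
    · rw [div_lt_iff₀ (lt_max_of_lt_left hdx)]
      calc ‖x - y‖ < r * Real.sqrt (infDist x (frontier D) * infDist y (frontier D)) := hxy
        _ ≤ r * max (infDist x (frontier D)) (infDist y (frontier D)) := by
            exact mul_le_mul_of_nonneg_left hsqrt_le hr0.le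
  · rintro y ⟨hyD, hy⟩
    refine ⟨hyD, ?_⟩
    have hdy := hdpos y hyD
    have hspos : 0 < Real.sqrt (infDist x (frontier D) * infDist y (frontier D)) :=
      Real.sqrt_pos.mpr (mul_pos hdx hdy)
    have hyle : ∀ p : frontier D,
        infDist y (frontier D) ≤ ‖y - (p : EuclideanSpace ℝ (Fin n))‖ := by
      intro p
      rw [← dist_eq_norm]
      exact infDist_le_dist_of_mem p.2
    have hbdd : BddAbove (Set.range fun p : frontier D =>
        ‖x - y‖ / max ‖x - (p : EuclideanSpace ℝ (Fin n))‖ ‖y - (p : EuclideanSpace ℝ (Fin n))‖) := by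
      refine ⟨‖x - y‖ / infDist x (frontier D), ?_⟩
      rintro _ ⟨p, rfl⟩
      apply div_le_div_of_nonneg_left (norm_nonneg _) hdx
      exact le_max_of_le_left (hxle p)
    have hall : ∀ p : frontier D,
        ‖x - y‖ / max ‖x - (p : EuclideanSpace ℝ (Fin n))‖ ‖y - (p : EuclideanSpace ℝ (Fin n))‖
          < r := fun p => lt_of_le_of_lt (le_ciSup hbdd p) hy
    -- nearest point to x
    obtain ⟨px, hpx, hpxd⟩ := hfrC.exists_infDist_eq_dist hfr x
    obtain ⟨py, hpy, hpyd⟩ := hfrC.exists_infDist_eq_dist hfr y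
    have key : ∀ (d : ℝ) (p : frontier D), d = ‖x - (p : EuclideanSpace ℝ (Fin n))‖ →
        True := fun _ _ _ => trivial
    have h1 : (1 - r) * ‖x - y‖ < r * infDist x (frontier D) := by
      have h := hall ⟨px, hpx⟩
      have hmax : max ‖x - px‖ ‖y - px‖ ≤ ‖x - y‖ + infDist x (frontier D) := by
        have hx' : ‖x - px‖ = infDist x (frontier D) := by
          rw [hpxd, dist_eq_norm]
        have hy' : ‖y - px‖ ≤ ‖y - x‖ + ‖x - px‖ := norm_sub_le_norm_sub_add_norm_sub y x px
        rw [norm_sub_rev y x] at hy'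
        refine max_le (by linarith [norm_nonneg (x - y)]) (by linarith)
      have hmaxpos : 0 < max ‖x - px‖ ‖y - px‖ := by
        refine lt_max_of_lt_left ?_
        rw [show ‖x - px‖ = infDist x (frontier D) from by rw [hpxd, dist_eq_norm]]
        exact hdx
      rw [div_lt_iff₀ hmaxpos] at h
      nlinarith
    have h2 : (1 - r) * ‖x - y‖ < r * infDist y (frontier D) := by
      have h := hall ⟨py, hpy⟩
      have hy' : ‖y - py‖ = infDist y (frontier D) := by rw [hpyd, dist_eq_norm]
      have hx' : ‖x - py‖ ≤ ‖x - y‖ + ‖y - py‖ := norm_sub_le_norm_sub_add_norm_sub x y py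
      have hmax : max ‖x - py‖ ‖y - py‖ ≤ ‖x - y‖ + infDist y (frontier D) := by
        refine max_le (by linarith) (by linarith [norm_nonneg (x - y)])
      have hmaxpos : 0 < max ‖x - py‖ ‖y - py‖ := by
        refine lt_max_of_lt_right ?_
        rw [hy']; exact hdy
      rw [div_lt_iff₀ hmaxpos] at h
      nlinarith
    -- min ≤ sqrt
    have hmin_le : min (infDist x (frontier D)) (infDist y (frontier D))
        ≤ Real.sqrt (infDist x (frontier D) * infDist y (frontier D)) := by
      rw [show min (infDist x (frontier D)) (infDist y (frontier D))
          = Real.sqrt ((min (infDist x (frontier D)) (infDist y (frontier D)))^2) from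
        (Real.sqrt_sq (le_min hdx.le hdy.le)).symm]
      apply Real.sqrt_le_sqrt
      nlinarith [min_le_left (infDist x (frontier D)) (infDist y (frontier D)),
        min_le_right (infDist x (frontier D)) (infDist y (frontier D)), hdx.le, hdy.le,
        le_min hdx.le hdy.le]
    have hmin : (1 - r) * ‖x - y‖
        < r * min (infDist x (frontier D)) (infDist y (frontier D)) := by
      rcases min_cases (infDist x (frontier D)) (infDist y (frontier D)) with ⟨hm, _⟩ | ⟨hm, _⟩ <;>
        rw [hm]
      · exact h1
      · exact h2
    have hkey : (1 - r) * ‖x - y‖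
        < r * Real.sqrt (infDist x (frontier D) * infDist y (frontier D)) :=
      lt_of_lt_of_le hmin (mul_le_mul_of_nonneg_left hmin_le hr0.le)
    have hpos1 : 0 ≤ c * ‖x - y‖ / Real.sqrt (infDist x (frontier D) * infDist y (frontier D)) :=
      div_nonneg (mul_nonneg hc0.le (norm_nonneg _)) hspos.le
    have hpos2 : 0 < c * r / (1 - r) := div_pos (mul_pos hc0 hr0) (by linarith)
    rw [hMetric, Real.log_lt_log_iff (by linarith) (by linarith)]
    have hfin : c * ‖x - y‖ / Real.sqrt (infDist x (frontier D) * infDist y (frontier D))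
        < c * r / (1 - r) := by
      rw [div_lt_div_iff₀ hspos (by linarith)]
      nlinarith
    linarith
end

section
/- Let D ⊊ ℝⁿ be an open set with nonempty boundary ∂D, let x ∈ D and r ∈ (0,1). Then B_t(x, R₁) ⊆ B_{ĉ}(x, r) ⊆ B_t(x, R₂), where R₁ = r/(2+r), R₂ = r/(2(1−r)), and t_D is the t metric. -/
open Set Metric

/-- The `t` metric: `t_D(x,y) = |x−y| / (|x−y| + d(x) + d(y))`. -/
noncomputable def tMetric {E : Type*} [SeminormedAddCommGroup E] (D : Set E) (x y : E) : ℝ :=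
  ‖x - y‖ / (‖x - y‖ + infDist x (frontier D) + infDist y (frontier D))

/-- Theorem: `B_t(x, r/(2+r)) ⊆ B_{ĉ}(x, r) ⊆ B_t(x, r/(2(1−r)))`. -/
theorem tMetric_ctilde_ball_inclusions {n : ℕ} (hn : 1 ≤ n)
    (D : Set (EuclideanSpace ℝ (Fin n))) (hD : IsOpen D) (hDproper : D ≠ Set.univ)
    (hfr : (frontier D).Nonempty)
    (x : EuclideanSpace ℝ (Fin n)) (hx : x ∈ D) (r : ℝ) (hr0 : 0 < r) (hr1 : r < 1) :
    {y | y ∈ D ∧ tMetric D x y < r / (2 + r)} ⊆ {y | y ∈ D ∧ ctilde D x y < r} ∧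
    {y | y ∈ D ∧ ctilde D x y < r} ⊆ {y | y ∈ D ∧ tMetric D x y < r / (2 * (1 - r))} := by
  have hxnotfr : x ∉ frontier D := by
    rw [hD.frontier_eq]; exact fun h => h.2 hx
  have hdx : 0 < infDist x (frontier D) :=
    (isClosed_frontier.notMem_iff_infDist_pos hfr).1 hxnotfr
  set dx := infDist x (frontier D) with hdxdef
  constructor
  · rintro y ⟨hy, hty⟩
    refine ⟨hy, ?_⟩
    set L := ‖x - y‖ with hLdef
    have hLnn : 0 ≤ L := norm_nonneg _
    set dy := infDist y (frontier D) with hdydef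
    have hdy : 0 ≤ dy := infDist_nonneg
    have hsum : 0 < dx + dy := by linarith
    have hlt : 2 * L < r * (dx + dy) := by
      unfold tMetric at hty
      rw [div_lt_div_iff₀ (by linarith) (by linarith)] at hty
      nlinarith
    have hbound : ∀ p : frontier D,
        L / max ‖x - (p : EuclideanSpace ℝ (Fin n))‖ ‖y - (p : EuclideanSpace ℝ (Fin n))‖
          ≤ 2 * L / (dx + dy) := by
      intro p
      set M := max ‖x - (p : EuclideanSpace ℝ (Fin n))‖ ‖y - (p : EuclideanSpace ℝ (Fin n))‖
        with hMdef
      have h1 : dx ≤ ‖x - (p : EuclideanSpace ℝ (Fin n))‖ := by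
        rw [← dist_eq_norm]; exact infDist_le_dist_of_mem p.2
      have h2 : dy ≤ ‖y - (p : EuclideanSpace ℝ (Fin n))‖ := by
        rw [← dist_eq_norm]; exact infDist_le_dist_of_mem p.2
      have hM1 : ‖x - (p : EuclideanSpace ℝ (Fin n))‖ ≤ M := le_max_left _ _
      have hM2 : ‖y - (p : EuclideanSpace ℝ (Fin n))‖ ≤ M := le_max_right _ _
      have hMpos : 0 < M := lt_of_lt_of_le hdx (h1.trans hM1)
      rw [div_le_div_iff₀ hMpos hsum]
      nlinarith
    have hsup : ctilde D x y ≤ 2 * L / (dx + dy) :=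
      Real.iSup_le hbound (by positivity)
    have : 2 * L / (dx + dy) < r := (div_lt_iff₀ hsum).2 (by linarith)
    linarith
  · rintro y ⟨hy, hcy⟩
    refine ⟨hy, ?_⟩
    set L := ‖x - y‖ with hLdef
    have hLnn : 0 ≤ L := norm_nonneg _
    set dy := infDist y (frontier D) with hdydef
    have hdy : 0 ≤ dy := infDist_nonneg
    unfold ctilde at hcy
    have hbdd : BddAbove (Set.range fun p : frontier D =>
        L / max ‖x - (p : EuclideanSpace ℝ (Fin n))‖ ‖y - (p : EuclideanSpace ℝ (Fin n))‖) := by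
      refine ⟨L / dx, ?_⟩
      rintro _ ⟨p, rfl⟩
      have h1 : dx ≤ ‖x - (p : EuclideanSpace ℝ (Fin n))‖ := by
        rw [← dist_eq_norm]; exact infDist_le_dist_of_mem p.2
      have : dx ≤ max ‖x - (p : EuclideanSpace ℝ (Fin n))‖ ‖y - (p : EuclideanSpace ℝ (Fin n))‖ :=
        h1.trans (le_max_left _ _)
      exact div_le_div_of_nonneg_left hLnn hdx this
    have hterm : ∀ p : frontier D,
        L / max ‖x - (p : EuclideanSpace ℝ (Fin n))‖ ‖y - (p : EuclideanSpace ℝ (Fin n))‖ < r :=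
      fun p => lt_of_le_of_lt (le_ciSup hbdd p) hcy
    -- From each term, extract lower bounds on distances to the frontier
    have key : ∀ p ∈ frontier D, L * (1 - r) / r ≤ dist x p ∧ L * (1 - r) / r ≤ dist y p := by
      intro p hp
      have h := hterm ⟨p, hp⟩
      set a := ‖x - p‖ with ha
      set b := ‖y - p‖ with hb
      have hax : dist x p = a := dist_eq_norm _ _
      have hby : dist y p = b := dist_eq_norm _ _
      have hM : 0 < max a b := lt_of_lt_of_le hdx (by
        calc dx ≤ dist x p := infDist_le_dist_of_mem hp
        _ = a := hax
        _ ≤ max a b := le_max_left _ _)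
      rw [div_lt_iff₀ hM] at h
      have htri : b ≤ L + a := by
        have := norm_sub_le_norm_sub_add_norm_sub y x p
        simpa [ha, hb, hLdef, norm_sub_rev] using this
      have htri2 : a ≤ L + b := by
        have := norm_sub_le_norm_sub_add_norm_sub x y p
        simpa [ha, hb, hLdef] using this
      have hmaxa : max a b ≤ L + a := max_le (by linarith) htri
      have hmaxb : max a b ≤ L + b := max_le htri2 (by linarith)
      constructor
      · rw [hax, div_le_iff₀ hr0]
        nlinarith [le_trans h.le (mul_le_mul_of_nonneg_left hmaxa hr0.le)]
      · rw [hby, div_le_iff₀ hr0]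
        nlinarith [le_trans h.le (mul_le_mul_of_nonneg_left hmaxb hr0.le)]
    have hdx2 : L * (1 - r) / r ≤ dx := by
      by_contra hcon
      push_neg at hcon
      obtain ⟨p, hp, hplt⟩ := (infDist_lt_iff hfr).1 hcon
      exact absurd (key p hp).1 (not_le.2 hplt)
    have hdy2 : L * (1 - r) / r ≤ dy := by
      by_contra hcon
      push_neg at hcon
      obtain ⟨p, hp, hplt⟩ := (infDist_lt_iff hfr).1 hcon
      exact absurd (key p hp).2 (not_le.2 hplt)
    have hrdx : L * (1 - r) ≤ r * dx := by
      rw [div_le_iff₀ hr0] at hdx2; linarith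
    have hrdy : L * (1 - r) ≤ r * dy := by
      rw [div_le_iff₀ hr0] at hdy2; linarith
    unfold tMetric
    rw [div_lt_div_iff₀ (by linarith) (by nlinarith)]
    rcases hLnn.eq_or_lt with h0 | h0
    · nlinarith [mul_pos hr0 hdx, mul_nonneg hr0.le hdy]
    · nlinarith [mul_pos hr0 h0]
end

section
/- Let a ∈ Bⁿ with 0 < |a| < 1, set a* = a/|a|², r² = |a*|² − 1, and let σ_a(x) = a* + r²·(x − a*)/|x − a*|² be the inversion in the sphere with center a* and radius r (a Möbius transformation of Bⁿ onto itself with σ_a(a) = 0). Then for all x, y ∈ Bⁿ, ((1−|a|)/(1+|a|))·ĉ_{Bⁿ}(x,y) ≤ ĉ_{Bⁿ}(σ_a(x), σ_a(y)) ≤ ((1+|a|)/(1−|a|))·ĉ_{Bⁿ}(x,y). -/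
open Set Metric

/-- The point `a* = a/|a|²`. -/
noncomputable def aStar {E : Type*} [NormedAddCommGroup E] [NormedSpace ℝ E] (a : E) : E :=
  (‖a‖ ^ 2)⁻¹ • a

/-- The inversion `σ_a(x) = a* + r²·(x − a*)/|x − a*|²` in the sphere of center `a*`
and radius `r`, where `r² = |a*|² − 1`. -/
noncomputable def sigmaInv {E : Type*} [NormedAddCommGroup E] [NormedSpace ℝ E] (a x : E) :
    E :=
  aStar a + ((‖aStar a‖ ^ 2 - 1) / ‖x - aStar a‖ ^ 2) • (x - aStar a)

/-! σ_a is the inversion in the sphere of center a* and radius r, which is orthogonal to the unit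
sphere since r² = |a*|² − 1; hence it permutes the boundary points p over which ĉ takes its
supremum. An inversion multiplies |u − v| by r² / (|u − a*| |v − a*|), so the ratio
|σx − σy| / max(|σx − σp|, |σy − σp|) equals
|p − a*| |x − y| / max(|y − a*| |x − p|, |x − a*| |y − p|). The distances from a* to points of the
closed ball lie in [|a*| − 1, |a*| + 1], and (|a*| − 1) / (|a*| + 1) = (1 − |a|) / (1 + |a|). -/

open EuclideanGeometry

noncomputable def chordRatio {P : Type*} [PseudoMetricSpace P] (x y p : P) : ℝ :=
  dist x y / max (dist x p) (dist y p)

section chordRatio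

variable {P : Type*} [PseudoMetricSpace P]

lemma chordRatio_le_two (x y p : P) : chordRatio x y p ≤ 2 := by
  refine div_le_of_le_mul₀ (le_max_of_le_left dist_nonneg) zero_le_two ?_
  calc dist x y ≤ dist x p + dist y p := dist_triangle_right x y p
    _ ≤ 2 * max (dist x p) (dist y p) := by
      linarith [le_max_left (dist x p) (dist y p), le_max_right (dist x p) (dist y p)]

lemma bddAbove_range_chordRatio {ι : Type*} (x y : P) (p : ι → P) :
    BddAbove (range fun i ↦ chordRatio x y (p i)) :=
  ⟨2, by rintro _ ⟨i, rfl⟩; exact chordRatio_le_two x y (p i)⟩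

end chordRatio

lemma ctilde_ball_eq_iSup_chordRatio {E : Type*} [NormedAddCommGroup E] [NormedSpace ℝ E]
    (z : E) {r : ℝ} (hr : r ≠ 0) (x y : E) :
    ctilde (ball z r) x y = ⨆ p : sphere z r, chordRatio x y (p : E) := by
  rw [ctilde, frontier_ball z hr]
  simp only [chordRatio, dist_eq_norm]

lemma mul_iSup_le_iSup_of_mul_le {ι : Type*} {f g : ι → ℝ} {k : ℝ} (hk : 0 ≤ k)
    (hg : BddAbove (range g)) (h : ∀ i, k * f i ≤ g i) : k * ⨆ i, f i ≤ ⨆ i, g i := by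
  rw [Real.mul_iSup_of_nonneg hk]
  exact ciSup_mono hg h

lemma iSup_le_mul_iSup_of_le_mul {ι : Type*} {f g : ι → ℝ} {k : ℝ} (hk : 0 ≤ k)
    (hf : BddAbove (range f)) (h : ∀ i, g i ≤ k * f i) : ⨆ i, g i ≤ k * ⨆ i, f i := by
  obtain ⟨b, hb⟩ := hf
  rw [Real.mul_iSup_of_nonneg hk]
  refine ciSup_mono ⟨k * b, ?_⟩ h
  rintro _ ⟨i, rfl⟩
  exact mul_le_mul_of_nonneg_left (hb ⟨i, rfl⟩) hk

lemma div_max_mul_mul_mem_Icc {lo hi dx dy dp L A B : ℝ} (hlo : 0 < lo)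
    (hdx : dx ∈ Icc lo hi) (hdy : dy ∈ Icc lo hi) (hdp : dp ∈ Icc lo hi)
    (hL : 0 ≤ L) (hA : 0 ≤ A) (hB : 0 ≤ B) :
    dp * L / max (dy * A) (dx * B) ∈ Icc (lo / hi * (L / max A B)) (hi / lo * (L / max A B)) := by
  have hhi : 0 < hi := hlo.trans_le (hdx.1.trans hdx.2)
  have hM_lo : lo * max A B ≤ max (dy * A) (dx * B) := by
    rw [mul_max_of_nonneg _ _ hlo.le]
    exact max_le_max (by nlinarith [hdy.1]) (by nlinarith [hdx.1])
  have hM_hi : max (dy * A) (dx * B) ≤ hi * max A B := by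
    rw [mul_max_of_nonneg _ _ hhi.le]
    exact max_le_max (by nlinarith [hdy.2]) (by nlinarith [hdx.2])
  rcases (le_max_of_le_left hA : 0 ≤ max A B).eq_or_lt with hN | hN
  · have hM : max (dy * A) (dx * B) = 0 := by
      rw [← hN, mul_zero] at hM_hi hM_lo; exact le_antisymm hM_hi hM_lo
    simp [← hN, hM]
  rw [div_mul_div_comm, div_mul_div_comm]
  constructor
  · exact div_le_div₀ (by nlinarith [hdp.1]) (by nlinarith [hdp.1])
      ((mul_pos hlo hN).trans_le hM_lo) hM_hi
  · exact div_le_div₀ (by positivity) (by nlinarith [hdp.2]) (mul_pos hlo hN) hM_lo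

lemma dist_mem_Icc_of_norm_le_one {E : Type*} [SeminormedAddCommGroup E] (c : E) {z : E}
    (hz : ‖z‖ ≤ 1) :
    dist z c ∈ Icc (‖c‖ - 1) (‖c‖ + 1) := by
  rw [dist_eq_norm]
  constructor
  · linarith [norm_sub_rev z c, norm_sub_norm_le c z]
  · linarith [norm_sub_le z c]

section inversion

variable {V : Type*} [NormedAddCommGroup V] [InnerProductSpace ℝ V]

lemma chordRatio_inversion {c x y p : V} {R : ℝ} (hR : R ≠ 0) (hx : x ≠ c) (hy : y ≠ c)
    (hp : p ≠ c) :
    chordRatio (inversion c R x) (inversion c R y) (inversion c R p) =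
      dist p c * dist x y / max (dist y c * dist x p) (dist x c * dist y p) := by
  have hxc := dist_pos.2 hx
  have hyc := dist_pos.2 hy
  have hpc := dist_pos.2 hp
  set k := R ^ 2 / (dist x c * dist y c * dist p c)
  have hk : 0 < k := by positivity
  rw [chordRatio, dist_inversion_inversion hx hy, dist_inversion_inversion hx hp,
    dist_inversion_inversion hy hp,
    show R ^ 2 / (dist x c * dist p c) * dist x p = k * (dist y c * dist x p) by
      simp only [k]; field_simp,
    show R ^ 2 / (dist y c * dist p c) * dist y p = k * (dist x c * dist y p) by
      simp only [k]; field_simp,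
    ← mul_max_of_nonneg _ _ hk.le]
  simp only [k]
  field_simp

lemma norm_inversion_of_norm_eq_one {c q : V} {R : ℝ} (hR : R ^ 2 = ‖c‖ ^ 2 - 1)
    (hq : ‖q‖ = 1) : ‖inversion c R q‖ = 1 := by
  rcases eq_or_ne q c with rfl | hqc
  · rwa [inversion_self]
  have hD : 0 < ‖q - c‖ := norm_pos_iff.2 (sub_ne_zero.2 hqc)
  have hsq : ‖inversion c R q‖ ^ 2 = 1 := by
    rw [inversion, vsub_eq_sub, vadd_eq_add, dist_eq_norm, norm_add_sq_real, norm_smul,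
      real_inner_smul_left, inner_sub_left, real_inner_self_eq_norm_sq]
    have hc : ‖c‖ ^ 2 = R ^ 2 + 1 := by linarith
    have hinner : inner ℝ q c = (R ^ 2 + 2 - ‖q - c‖ ^ 2) / 2 := by
      linarith [hq ▸ norm_sub_sq_real q c]
    rw [Real.norm_of_nonneg (by positivity), hinner, hc]
    field_simp
    ring
  exact (pow_eq_one_iff_of_nonneg (norm_nonneg _) two_ne_zero).1 hsq

lemma chordRatio_inversion_mem_Icc {c x y p : V} {R : ℝ} (hc : 1 < ‖c‖) (hR : R ≠ 0)
    (hx : ‖x‖ ≤ 1) (hy : ‖y‖ ≤ 1) (hp : ‖p‖ ≤ 1) :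
    chordRatio (inversion c R x) (inversion c R y) (inversion c R p) ∈
      Icc ((‖c‖ - 1) / (‖c‖ + 1) * chordRatio x y p)
        ((‖c‖ + 1) / (‖c‖ - 1) * chordRatio x y p) := by
  have hx' := dist_mem_Icc_of_norm_le_one c hx
  have hy' := dist_mem_Icc_of_norm_le_one c hy
  have hp' := dist_mem_Icc_of_norm_le_one c hp
  have hne : ∀ {z : V}, dist z c ∈ Icc (‖c‖ - 1) (‖c‖ + 1) → z ≠ c := fun hz ↦
    dist_pos.1 (by linarith [hz.1])
  rw [chordRatio_inversion hR (hne hx') (hne hy') (hne hp'), chordRatio]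
  exact div_max_mul_mul_mem_Icc (by linarith) hx' hy' hp' dist_nonneg dist_nonneg dist_nonneg

theorem ctilde_unitBall_inversion_mem_Icc {c x y : V} {R : ℝ} (hc : 1 < ‖c‖)
    (hR : R ^ 2 = ‖c‖ ^ 2 - 1) (hx : ‖x‖ ≤ 1) (hy : ‖y‖ ≤ 1) :
    ctilde (ball (0 : V) 1) (inversion c R x) (inversion c R y) ∈
      Icc ((‖c‖ - 1) / (‖c‖ + 1) * ctilde (ball (0 : V) 1) x y)
        ((‖c‖ + 1) / (‖c‖ - 1) * ctilde (ball (0 : V) 1) x y) := by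
  have hR0 : R ≠ 0 := by rintro rfl; nlinarith
  let f : sphere (0 : V) 1 → sphere (0 : V) 1 := fun q ↦
    ⟨inversion c R q, mem_sphere_zero_iff_norm.2 (norm_inversion_of_norm_eq_one hR
      (norm_eq_of_mem_sphere q))⟩
  have hf : Function.Surjective f :=
    Function.Involutive.surjective fun q ↦ Subtype.ext (inversion_inversion c hR0 q)
  have hσ : ctilde (ball (0 : V) 1) (inversion c R x) (inversion c R y) =
      ⨆ q : sphere (0 : V) 1,
        chordRatio (inversion c R x) (inversion c R y) (inversion c R q) := by
    rw [ctilde_ball_eq_iSup_chordRatio 0 one_ne_zero]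
    exact (hf.iSup_comp _).symm
  have hbounds := fun q : sphere (0 : V) 1 ↦
    chordRatio_inversion_mem_Icc (R := R) hc hR0 hx hy (norm_eq_of_mem_sphere q).le
  rw [hσ, ctilde_ball_eq_iSup_chordRatio 0 one_ne_zero]
  exact ⟨mul_iSup_le_iSup_of_mul_le (div_nonneg (by linarith) (by linarith))
      (bddAbove_range_chordRatio _ _ _) fun q ↦ (hbounds q).1,
    iSup_le_mul_iSup_of_le_mul (div_nonneg (by linarith) (by linarith))
      (bddAbove_range_chordRatio _ _ _) fun q ↦ (hbounds q).2⟩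

end inversion

lemma norm_aStar {E : Type*} [NormedAddCommGroup E] [NormedSpace ℝ E] (a : E) :
    ‖aStar a‖ = ‖a‖⁻¹ := by
  rw [aStar, norm_smul, norm_inv, norm_pow, norm_norm]
  rcases eq_or_ne ‖a‖ 0 with h | h
  · simp [h]
  · field_simp

lemma sigmaInv_eq_inversion {E : Type*} [NormedAddCommGroup E] [InnerProductSpace ℝ E]
    (a x : E) (h : 1 ≤ ‖aStar a‖) :
    sigmaInv a x = inversion (aStar a) (Real.sqrt (‖aStar a‖ ^ 2 - 1)) x := by
  simp only [sigmaInv, inversion, vsub_eq_sub, vadd_eq_add]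
  rw [div_pow, Real.sq_sqrt (by nlinarith), dist_eq_norm]
  abel

theorem ctilde_mobius_distortion_general {n : ℕ}
    (a x y : EuclideanSpace ℝ (Fin n)) (ha0 : a ≠ 0) (ha1 : ‖a‖ < 1)
    (hx : ‖x‖ < 1) (hy : ‖y‖ < 1) :
    (1 - ‖a‖) / (1 + ‖a‖) * ctilde (Metric.ball (0 : EuclideanSpace ℝ (Fin n)) 1) x y ≤
      ctilde (Metric.ball (0 : EuclideanSpace ℝ (Fin n)) 1) (sigmaInv a x) (sigmaInv a y) ∧
    ctilde (Metric.ball (0 : EuclideanSpace ℝ (Fin n)) 1) (sigmaInv a x) (sigmaInv a y) ≤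
      (1 + ‖a‖) / (1 - ‖a‖) * ctilde (Metric.ball (0 : EuclideanSpace ℝ (Fin n)) 1) x y := by
  have hna : 0 < ‖a‖ := norm_pos_iff.2 ha0
  have hc : 1 < ‖aStar a‖ := norm_aStar a ▸ (one_lt_inv₀ hna).2 ha1
  have hσ : sigmaInv a = inversion (aStar a) (Real.sqrt (‖aStar a‖ ^ 2 - 1)) :=
    funext fun z ↦ sigmaInv_eq_inversion a z hc.le
  have hbounds := ctilde_unitBall_inversion_mem_Icc hc (Real.sq_sqrt (by nlinarith)) hx.le hy.le
  rwa [← hσ, norm_aStar,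
    show (‖a‖⁻¹ - 1) / (‖a‖⁻¹ + 1) = (1 - ‖a‖) / (1 + ‖a‖) by field_simp,
    show (‖a‖⁻¹ + 1) / (‖a‖⁻¹ - 1) = (1 + ‖a‖) / (1 - ‖a‖) by field_simp] at hbounds

/-- Theorem: for `a ∈ Bⁿ \ {0}` and all `x, y ∈ Bⁿ`,
`((1−|a|)/(1+|a|))·ĉ_{Bⁿ}(x,y) ≤ ĉ_{Bⁿ}(σ_a(x), σ_a(y)) ≤ ((1+|a|)/(1−|a|))·ĉ_{Bⁿ}(x,y)`. -/
theorem ctilde_mobius_distortion {n : ℕ} (hn : 2 ≤ n)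
    (a x y : EuclideanSpace ℝ (Fin n)) (ha0 : a ≠ 0) (ha1 : ‖a‖ < 1)
    (hx : ‖x‖ < 1) (hy : ‖y‖ < 1) :
    (1 - ‖a‖) / (1 + ‖a‖) * ctilde (Metric.ball (0 : EuclideanSpace ℝ (Fin n)) 1) x y ≤
      ctilde (Metric.ball (0 : EuclideanSpace ℝ (Fin n)) 1) (sigmaInv a x) (sigmaInv a y) ∧
    ctilde (Metric.ball (0 : EuclideanSpace ℝ (Fin n)) 1) (sigmaInv a x) (sigmaInv a y) ≤
      (1 + ‖a‖) / (1 - ‖a‖) * ctilde (Metric.ball (0 : EuclideanSpace ℝ (Fin n)) 1) x y :=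
  ctilde_mobius_distortion_general a x y ha0 ha1 hx hy
end

section
/- Let D ⊊ ℝⁿ be an open set with nonempty boundary, let f : D → ℝⁿ be a homeomorphism of D onto an open set fD ⊊ ℝⁿ with nonempty boundary, and suppose there is L ≥ 1 such that ĉ_D(x,y)/L ≤ ĉ_{fD}(f(x), f(y)) ≤ L·ĉ_D(x,y) for all x, y ∈ D. Then f has linear dilatation at most L² at every point: for every z ∈ D, limsup_{r→0⁺} [ sup{|f(x) − f(z)| : x ∈ D, |x−z| = r} / inf{|f(y) − f(z)| : y ∈ D, |y−z| = r} ] ≤ L². -/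
open Set Metric Filter Topology

/-! The quantity `ĉ_D(x, z)` is squeezed between `|x - z| / (δ + |x - z|)` and `|x - z| / δ`,
where `δ = dist(z, ∂D) > 0`. Hence, with `δ' = dist(f z, ∂(fD))`, the bilipschitz condition traps
`|f x - f z|` for `|x - z| = r` between `r δ' / (L (δ + r))` and `L r δ' / (δ - L r)`. The ratio of
these bounds is `L² (δ + r) / (δ - L r)`, which tends to `L²` as `r → 0⁺`. -/

lemma IsOpen.infDist_frontier_pos {X : Type*} [PseudoMetricSpace X] {D : Set X} {z : X}
    (hD : IsOpen D) (hfr : (frontier D).Nonempty) (hz : z ∈ D) :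
    0 < infDist z (frontier D) :=
  (isClosed_frontier.notMem_iff_infDist_pos hfr).mp fun h => (hD.frontier_eq ▸ h).2 hz

section Ctilde

variable {E : Type*} [SeminormedAddCommGroup E] {D : Set E} {x y : E}

lemma ctilde_nonneg : 0 ≤ ctilde D x y :=
  Real.iSup_nonneg fun _ => by positivity

lemma div_max_le_div_infDist (hy : 0 < infDist y (frontier D)) {p : E} (hp : p ∈ frontier D) :
    ‖x - y‖ / max ‖x - p‖ ‖y - p‖ ≤ ‖x - y‖ / infDist y (frontier D) := by
  have hyp : infDist y (frontier D) ≤ ‖y - p‖ := by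
    rw [← dist_eq_norm]; exact infDist_le_dist_of_mem hp
  exact div_le_div_of_nonneg_left (norm_nonneg _) hy (hyp.trans (le_max_right _ _))

lemma ctilde_le_div_infDist (hy : 0 < infDist y (frontier D)) :
    ctilde D x y ≤ ‖x - y‖ / infDist y (frontier D) :=
  Real.iSup_le (fun p => div_max_le_div_infDist hy p.2) (by positivity)

lemma div_max_le_ctilde (hy : 0 < infDist y (frontier D)) {p : E} (hp : p ∈ frontier D) :
    ‖x - y‖ / max ‖x - p‖ ‖y - p‖ ≤ ctilde D x y := by
  refine le_ciSup (f := fun p : frontier D => ‖x - y‖ / max ‖x - (p : E)‖ ‖y - (p : E)‖)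
    ⟨‖x - y‖ / infDist y (frontier D), ?_⟩ ⟨p, hp⟩
  rintro _ ⟨q, rfl⟩
  exact div_max_le_div_infDist hy q.2

lemma div_dist_add_le_ctilde (hy : 0 < infDist y (frontier D)) {p : E} (hp : p ∈ frontier D) :
    ‖x - y‖ / (dist y p + ‖x - y‖) ≤ ctilde D x y := by
  have hyp : 0 < ‖y - p‖ := by
    rw [← dist_eq_norm]; exact hy.trans_le (infDist_le_dist_of_mem hp)
  calc ‖x - y‖ / (dist y p + ‖x - y‖) ≤ ‖x - y‖ / max ‖x - p‖ ‖y - p‖ := by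
        rw [dist_eq_norm]
        gcongr
        exact max_le (by linarith [norm_sub_le_norm_sub_add_norm_sub x y p])
          (by linarith [norm_nonneg (x - y)])
    _ ≤ ctilde D x y := div_max_le_ctilde hy hp

lemma div_infDist_add_le_ctilde (hfr : (frontier D).Nonempty)
    (hy : 0 < infDist y (frontier D)) :
    ‖x - y‖ / (infDist y (frontier D) + ‖x - y‖) ≤ ctilde D x y := by
  rcases (norm_nonneg (x - y)).eq_or_lt with hr | hr
  · rw [← hr, zero_div]; exact ctilde_nonneg
  obtain ⟨p₀, hp₀⟩ := hfr
  have hc : 0 < ctilde D x y := by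
    refine lt_of_lt_of_le ?_ (div_dist_add_le_ctilde hy hp₀)
    have := infDist_le_dist_of_mem (x := y) hp₀
    positivity
  have hinf : ‖x - y‖ / ctilde D x y - ‖x - y‖ ≤ infDist y (frontier D) := by
    refine (le_infDist ⟨p₀, hp₀⟩).mpr fun p hp => ?_
    have hpos : 0 < dist y p + ‖x - y‖ := by positivity
    have := div_dist_add_le_ctilde hy hp (x := x)
    rw [div_le_iff₀ hpos, ← div_le_iff₀' hc] at this
    linarith
  rw [div_le_iff₀ (by positivity), ← div_le_iff₀' hc]
  linarith

end Ctilde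

section Bilipschitz

variable {E F : Type*} [SeminormedAddCommGroup E] [SeminormedAddCommGroup F]
  {D : Set E} {V : Set F}

lemma norm_sub_mul_le_of_ctilde_le {x z : E} {u w : F} {L : ℝ} (hL : 0 ≤ L)
    (hVfr : (frontier V).Nonempty) (hz : 0 < infDist z (frontier D))
    (hw : 0 < infDist w (frontier V)) (h : ctilde V u w ≤ L * ctilde D x z) :
    ‖u - w‖ * (infDist z (frontier D) - L * ‖x - z‖) ≤ L * ‖x - z‖ * infDist w (frontier V) := by
  have hcmp : ‖u - w‖ / (infDist w (frontier V) + ‖u - w‖) ≤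
      L * ‖x - z‖ / infDist z (frontier D) :=
    calc ‖u - w‖ / (infDist w (frontier V) + ‖u - w‖) ≤ ctilde V u w :=
          div_infDist_add_le_ctilde hVfr hw
      _ ≤ L * ctilde D x z := h
      _ ≤ L * (‖x - z‖ / infDist z (frontier D)) := by gcongr; exact ctilde_le_div_infDist hz
      _ = L * ‖x - z‖ / infDist z (frontier D) := (mul_div_assoc _ _ _).symm
  rw [div_le_div_iff₀ (by positivity) hz] at hcmp
  linarith

lemma norms_on_sphere_subset_Icc {f : E → F} {L : ℝ} (hL : 0 < L)
    (hDfr : (frontier D).Nonempty) (hVfr : (frontier V).Nonempty) {z : E}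
    (hz : 0 < infDist z (frontier D)) (hfz : 0 < infDist (f z) (frontier V))
    (hbilip : ∀ x ∈ D, ctilde D x z / L ≤ ctilde V (f x) (f z) ∧
      ctilde V (f x) (f z) ≤ L * ctilde D x z)
    {r : ℝ} (hr : 0 < r) (hrL : L * r < infDist z (frontier D)) :
    {d : ℝ | ∃ x ∈ D, ‖x - z‖ = r ∧ d = ‖f x - f z‖} ⊆
      Icc (r * infDist (f z) (frontier V) / (L * (infDist z (frontier D) + r)))
        (L * r * infDist (f z) (frontier V) / (infDist z (frontier D) - L * r)) := by
  rintro _ ⟨x, hx, rfl, rfl⟩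
  have hlower := norm_sub_mul_le_of_ctilde_le hL.le hDfr hfz hz
    ((div_le_iff₀' hL).mp (hbilip x hx).1)
  have hupper := norm_sub_mul_le_of_ctilde_le hL.le hVfr hz hfz (hbilip x hx).2
  constructor
  · rw [div_le_iff₀ (by positivity)]
    linarith
  · rw [le_div_iff₀ (by linarith)]
    linarith

end Bilipschitz

lemma sSup_div_sInf_le_of_subset_Icc {S : Set ℝ} {a b : ℝ} (ha : 0 < a) (hb : 0 ≤ b)
    (hS : S ⊆ Icc a b) : sSup S / sInf S ≤ b / a := by
  rcases S.eq_empty_or_nonempty with rfl | hne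
  · simp only [Real.sSup_empty, zero_div]; positivity
  exact div_le_div₀ hb (csSup_le hne fun s hs => (hS hs).2) ha
    (le_csInf hne fun s hs => (hS hs).1)

lemma tendsto_mul_add_div_sub_mul_nhdsGT (c L : ℝ) {δ : ℝ} (hδ : δ ≠ 0) :
    Tendsto (fun r => c * (δ + r) / (δ - L * r)) (𝓝[>] 0) (𝓝 c) := by
  have h0 : Tendsto (fun r : ℝ => c * (δ + r) / (δ - L * r)) (𝓝 0)
      (𝓝 (c * (δ + 0) / (δ - L * 0))) :=
    (tendsto_const_nhds.mul (tendsto_const_nhds.add tendsto_id)).div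
      (tendsto_const_nhds.sub (tendsto_const_nhds.mul tendsto_id)) (by simpa using hδ)
  rw [add_zero, mul_zero, sub_zero, mul_div_cancel_right₀ _ hδ] at h0
  exact h0.mono_left nhdsWithin_le_nhds

theorem ctilde_bilipschitz_quasiconformal_general {n : ℕ}
    (D V : Set (EuclideanSpace ℝ (Fin n)))
    (hD : IsOpen D) (hDfr : (frontier D).Nonempty)
    (hV : IsOpen V) (hVfr : (frontier V).Nonempty)
    (f : EuclideanSpace ℝ (Fin n) → EuclideanSpace ℝ (Fin n))
    (himg : f '' D = V)
    (L : ℝ) (hL : 1 ≤ L)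
    (hbilip : ∀ x ∈ D, ∀ y ∈ D,
      ctilde D x y / L ≤ ctilde V (f x) (f y) ∧ ctilde V (f x) (f y) ≤ L * ctilde D x y) :
    ∀ z ∈ D,
      Filter.limsup
        (fun r : ℝ =>
          sSup {d : ℝ | ∃ x ∈ D, ‖x - z‖ = r ∧ d = ‖f x - f z‖} /
            sInf {d : ℝ | ∃ y ∈ D, ‖y - z‖ = r ∧ d = ‖f y - f z‖})
        (nhdsWithin (0 : ℝ) (Set.Ioi 0)) ≤ L ^ 2 := by
  intro z hz
  have hL0 : 0 < L := by linarith
  have hdz := hD.infDist_frontier_pos hDfr hz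
  have hd' := hV.infDist_frontier_pos hVfr (himg ▸ mem_image_of_mem f hz)
  set dz := infDist z (frontier D) with hdz_def
  set d' := infDist (f z) (frontier V) with hd'_def
  have hbound : ∀ᶠ r in 𝓝[>] 0, sSup {d : ℝ | ∃ x ∈ D, ‖x - z‖ = r ∧ d = ‖f x - f z‖} /
      sInf {d : ℝ | ∃ y ∈ D, ‖y - z‖ = r ∧ d = ‖f y - f z‖} ≤ L ^ 2 * (dz + r) / (dz - L * r) := by
    filter_upwards [Ioo_mem_nhdsGT (div_pos hdz hL0)] with r ⟨hr, hrdz⟩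
    have hrL : L * r < dz := by rwa [lt_div_iff₀' hL0] at hrdz
    have hsub := norms_on_sphere_subset_Icc hL0 hDfr hVfr hdz hd' (fun x hx => hbilip x hx z hz)
      hr hrL
    rw [← hdz_def, ← hd'_def] at hsub
    calc _ ≤ _ := sSup_div_sInf_le_of_subset_Icc (by positivity)
          (div_nonneg (by positivity) (by linarith)) hsub
      _ = L ^ 2 * (dz + r) / (dz - L * r) := by
        field_simp [(sub_pos.mpr hrL).ne']
  have hlim := tendsto_mul_add_div_sub_mul_nhdsGT (L ^ 2) L hdz.ne'
  refine (limsup_le_limsup hbound ?_ hlim.isBoundedUnder_le).trans_eq hlim.limsup_eq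
  exact isCoboundedUnder_le_of_le _ fun r =>
    div_nonneg (Real.sSup_nonneg (by rintro _ ⟨x, -, -, rfl⟩; positivity))
      (Real.sInf_nonneg (by rintro _ ⟨y, -, -, rfl⟩; positivity))

/-- Theorem: if `f` is a homeomorphism of an open set `D ⊊ ℝⁿ` (with nonempty boundary)
onto an open set `V = f(D) ⊊ ℝⁿ` (with nonempty boundary) which is `L`-bilipschitz with
respect to the `ĉ` metrics, then at every `z ∈ D` the linear dilatation of `f` is at most
`L²`:
`limsup_{r→0⁺} sup{|f(x)−f(z)| : x ∈ D, |x−z| = r} / inf{|f(y)−f(z)| : y ∈ D, |y−z| = r} ≤ L²`. -/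
theorem ctilde_bilipschitz_quasiconformal {n : ℕ} (hn : 1 ≤ n)
    (D V : Set (EuclideanSpace ℝ (Fin n)))
    (hD : IsOpen D) (hDproper : D ≠ Set.univ) (hDfr : (frontier D).Nonempty)
    (hV : IsOpen V) (hVproper : V ≠ Set.univ) (hVfr : (frontier V).Nonempty)
    (f g : EuclideanSpace ℝ (Fin n) → EuclideanSpace ℝ (Fin n))
    (himg : f '' D = V) (hfc : ContinuousOn f D) (hfinj : Set.InjOn f D)
    (hgc : ContinuousOn g V) (hgf : ∀ x ∈ D, g (f x) = x)
    (L : ℝ) (hL : 1 ≤ L)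
    (hbilip : ∀ x ∈ D, ∀ y ∈ D,
      ctilde D x y / L ≤ ctilde V (f x) (f y) ∧ ctilde V (f x) (f y) ≤ L * ctilde D x y) :
    ∀ z ∈ D,
      Filter.limsup
        (fun r : ℝ =>
          sSup {d : ℝ | ∃ x ∈ D, ‖x - z‖ = r ∧ d = ‖f x - f z‖} /
            sInf {d : ℝ | ∃ y ∈ D, ‖y - z‖ = r ∧ d = ‖f y - f z‖})
        (nhdsWithin (0 : ℝ) (Set.Ioi 0)) ≤ L ^ 2 :=
  ctilde_bilipschitz_quasiconformal_general D V hD hDfr hV hVfr f himg L hL hbilip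
end
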